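/- arXiv:cs/0201008 — 4 statements merged into one kernel-verified Lean document; each statement's English description precedes it below -/
import Mathlib

section
/- Every string tree t ∈ T(Σ) admits a unique representation t = ⟨s₀ t₁ s₁ t₂ s₂ ⋯ tₙ sₙ⟩ where n ≥ 0, each sᵢ is a (possibly empty) string over Σ, and each tᵢ ∈ T(Σ). -/
/-!  Common definitions: string trees over an alphabet (following
N. Schmidt, A. Patel, "Using Tree Automata and Regular Expressions to
Manipulate Hierarchically Structured Data").

Symbols: an ambient type `U` of "plain" symbols, extended with the two
angle brackets and the slash. -/

inductive TSym (U : Type) : Type where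
  | op : TSym U          -- ⟨
  | cl : TSym U          -- ⟩
  | slash : TSym U       -- /
  | ltr : U → TSym U     -- a plain symbol

namespace StringTree

variable {U V : Type}

/-- The letters of an alphabet `S ⊆ U`, viewed as (non-bracket) symbols. -/
def ltrs (S : Set U) : Set (TSym U) := {x | ∃ a ∈ S, x = TSym.ltr a}

/-- String trees over a set `S` of allowed non-bracket symbols:
`⟨⟩ ∈ T`, `⟨a⟩ ∈ T` for `a ∈ S`, closed under concatenation
`⟨x⟩·⟨y⟩ = ⟨xy⟩` and encapsulation `t ↦ ⟨t⟩`. -/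
inductive IsTree (S : Set (TSym U)) : List (TSym U) → Prop where
  | nil : IsTree S [TSym.op, TSym.cl]
  | single {x : TSym U} : x ∈ S → IsTree S [TSym.op, x, TSym.cl]
  | concat {x y : List (TSym U)} :
      IsTree S (TSym.op :: (x ++ [TSym.cl])) → IsTree S (TSym.op :: (y ++ [TSym.cl])) →
      IsTree S (TSym.op :: ((x ++ y) ++ [TSym.cl]))
  | encap {t : List (TSym U)} : IsTree S t → IsTree S (TSym.op :: (t ++ [TSym.cl]))

/-- `T(Σ)`, the set of string trees over the alphabet `Σ ⊆ U`. -/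
def TreeSet (S : Set U) : Set (List (TSym U)) := {t | IsTree (ltrs S) t}

/-- A plain string, viewed as a string of symbols. -/
def strOf (s : List U) : List (TSym U) := s.map TSym.ltr

/-- Move relation of a generalised non-deterministic finite string tree
automaton with initial states `Q0`, horizontal rules `Δ` and vertical
rules `γ`:
(a) `l⟨s⟩r ⇒ l⟨a/s⟩r` if `a ∈ Q0` (initial state assignment);
(b) `l⟨a/bs⟩r ⇒ l⟨c/s⟩r` if `(a,b) → c ∈ Δ` (horizontal move);
(c) `l⟨a/⟩r ⇒ lbr` if `b ∈ γ a` (vertical move). -/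
inductive GMove (Q0 : Set U) (Δ : Set (U × U × U)) (γ : U → Set U) :
    List (TSym U) → List (TSym U) → Prop where
  | init {l r : List (TSym U)} {s : List U} {a : U} :
      a ∈ Q0 →
      GMove Q0 Δ γ (l ++ [TSym.op] ++ strOf s ++ [TSym.cl] ++ r)
        (l ++ [TSym.op, TSym.ltr a, TSym.slash] ++ strOf s ++ [TSym.cl] ++ r)
  | horiz {l r : List (TSym U)} {s : List U} {a b c : U} :
      (a, b, c) ∈ Δ →
      GMove Q0 Δ γ (l ++ [TSym.op, TSym.ltr a, TSym.slash, TSym.ltr b] ++ strOf s ++ [TSym.cl] ++ r)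
        (l ++ [TSym.op, TSym.ltr c, TSym.slash] ++ strOf s ++ [TSym.cl] ++ r)
  | vert {l r : List (TSym U)} {a b : U} :
      b ∈ γ a →
      GMove Q0 Δ γ (l ++ [TSym.op, TSym.ltr a, TSym.slash, TSym.cl] ++ r)
        (l ++ [TSym.ltr b] ++ r)

/-- Move relation of an NFSTA: the GNFSTA moves with the single initial
state `q0` and with the vertical move `l⟨a/⟩r ⇒ lar`. -/
def NMove (q0 : U) (Δ : Set (U × U × U)) : List (TSym U) → List (TSym U) → Prop :=
  GMove {q0} Δ (fun a => {a})

/-- The final tree `⟨q/⟩`. -/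
def finalTree (q : U) : List (TSym U) := [TSym.op, TSym.ltr q, TSym.slash, TSym.cl]

/-- Acceptance by a GNFSTA: `t ⇒* ⟨q_f/⟩` for some `q_f ∈ Q_f`. -/
def GAccepts (Q0 : Set U) (Δ : Set (U × U × U)) (γ : U → Set U) (Qf : Set U)
    (t : List (TSym U)) : Prop :=
  ∃ qf ∈ Qf, Relation.ReflTransGen (GMove Q0 Δ γ) t (finalTree qf)

/-- The language of a GNFSTA: the set of trees of `T(Σ)` it accepts. -/
def GLang (Sa Q0 : Set U) (Δ : Set (U × U × U)) (γ : U → Set U) (Qf : Set U) :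
    Set (List (TSym U)) :=
  {t | t ∈ TreeSet Sa ∧ GAccepts Q0 Δ γ Qf t}

/-- Acceptance by an NFSTA. -/
def NAccepts (q0 : U) (Δ : Set (U × U × U)) (Qf : Set U) (t : List (TSym U)) : Prop :=
  GAccepts {q0} Δ (fun a => {a}) Qf t

/-- The language of an NFSTA. -/
def NLang (Sa : Set U) (q0 : U) (Δ : Set (U × U × U)) (Qf : Set U) : Set (List (TSym U)) :=
  GLang Sa {q0} Δ (fun a => {a}) Qf

/-- Well-formedness of a GNFSTA `(Σ, Q, Q_f, Q₀, Δ, γ)`: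
`Q` is finite, `Σ ⊆ Q`, `Q_f ⊆ Q`, `Q₀ ⊆ Q`, the rules of `Δ` are over `Q`,
and `γ` maps states of `Q` to sets of states of `Q`. -/
def GWF (Sa Q Qf Q0 : Set U) (Δ : Set (U × U × U)) (γ : U → Set U) : Prop :=
  Q.Finite ∧ Sa ⊆ Q ∧ Qf ⊆ Q ∧ Q0 ⊆ Q ∧
    (∀ p ∈ Δ, p.1 ∈ Q ∧ p.2.1 ∈ Q ∧ p.2.2 ∈ Q) ∧ (∀ q ∈ Q, γ q ⊆ Q)

/-- Well-formedness of an NFSTA `(Σ, Q, Q_f, q₀, Δ)`. -/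
def NWF (Sa Q Qf : Set U) (q0 : U) (Δ : Set (U × U × U)) : Prop :=
  Q.Finite ∧ Sa ⊆ Q ∧ Qf ⊆ Q ∧ q0 ∈ Q ∧ ∀ p ∈ Δ, p.1 ∈ Q ∧ p.2.1 ∈ Q ∧ p.2.2 ∈ Q

/-- A GNFSTA has pure states: no horizontal or vertical rule produces a
symbol of `Σ`, no horizontal rule has its state (first) component in `Σ`,
`γ(a) = ∅` for `a ∈ Σ`, and `Q₀ ∪ Q_f ⊆ Q ∖ Σ`. -/
def PureG (Sa Q Qf Q0 : Set U) (Δ : Set (U × U × U)) (γ : U → Set U) : Prop :=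
  (∀ p ∈ Δ, p.1 ∉ Sa ∧ p.2.2 ∉ Sa) ∧ (∀ a ∈ Sa, γ a = ∅) ∧
    (∀ q : U, ∀ p ∈ γ q, p ∉ Sa) ∧ Q0 ⊆ Q \ Sa ∧ Qf ⊆ Q \ Sa

/-- An NFSTA has pure states. -/
def PureN (Sa Q Qf : Set U) (q0 : U) (Δ : Set (U × U × U)) : Prop :=
  (∀ p ∈ Δ, p.1 ∉ Sa ∧ p.2.2 ∉ Sa) ∧ q0 ∈ Q \ Sa ∧ Qf ⊆ Q \ Sa


/-! Additional notions. -/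

/-- `⟨s₀ t₁ s₁ ⋯ tₙ sₙ⟩`: the string tree assembled from a head string `s₀`
and a list of pairs `(tᵢ, sᵢ)` of a subtree and a following string. -/
def flatRep (s0 : List U) (rest : List (List (TSym U) × List U)) : List (TSym U) :=
  TSym.op :: (strOf s0 ++ (rest.map (fun p => p.1 ++ strOf p.2)).flatten ++ [TSym.cl])

/-- The inner string of a tree `⟨x⟩`, i.e. `x`. -/
def innerStr (t : List (TSym U)) : List (TSym U) := (t.drop 1).dropLast

/-- Tree concatenation `⟨x⟩·⟨y⟩ = ⟨xy⟩`. -/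
def tconc (u v : List (TSym U)) : List (TSym U) :=
  TSym.op :: ((innerStr u ++ innerStr v) ++ [TSym.cl])

/-- The null tree `⟨⟩`. -/
def nilTree : List (TSym U) := [TSym.op, TSym.cl]

/-- `w` is a string over `Q ∪ {/}`. -/
def OverQSlash (Q : Set U) (w : List (TSym U)) : Prop :=
  ∀ x ∈ w, x = TSym.slash ∨ ∃ q ∈ Q, x = TSym.ltr q

/-- Renaming of symbols along a map of plain symbols. -/
def symRel (f : U → V) : TSym U → TSym V
  | TSym.op => TSym.op
  | TSym.cl => TSym.cl
  | TSym.slash => TSym.slash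
  | TSym.ltr a => TSym.ltr (f a)

/-- Renaming of the symbols of a tree along a map of plain symbols. -/
def treeRel (f : U → V) (t : List (TSym U)) : List (TSym V) := t.map (symRel f)

/-- The injective renaming `a ↦ {a}`. -/
def sing : U → Set U := fun a => {a}

/-- The vertical-rule function `γ` of a pure-state GNFSTA, extended by
`γ(a) = {a}` for `a ∈ Σ` and to sets by unions: `γ(b') = ⋃_{b ∈ b'} γ(b)`. -/
def gammaExt (Sa : Set U) (γ : U → Set U) (b' : Set U) : Set U :=
  {c | ∃ b ∈ b', c ∈ γ b ∨ (c = b ∧ b ∈ Sa)}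

/-- The transition function of the subset construction:
`Δ'(a', b') = {c | (a,b) → c ∈ Δ, a ∈ a', b ∈ γ(b')}`. -/
def subsetDelta (Sa : Set U) (γ : U → Set U) (Δ : Set (U × U × U)) (a' b' : Set U) : Set U :=
  {c | ∃ a ∈ a', ∃ b ∈ gammaExt Sa γ b', (a, b, c) ∈ Δ}

/-- The rule set of the subset-construction DFSTA, defined on pairs of
subsets of `Q`. -/
def subsetRules (Sa : Set U) (γ : U → Set U) (Δ : Set (U × U × U)) (Q : Set U) :
    Set (Set U × Set U × Set U) :=
  {x | x.1 ⊆ Q ∧ x.2.1 ⊆ Q ∧ x.2.2 = subsetDelta Sa γ Δ x.1 x.2.1}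

/-- A rule set is deterministic: at most one rule per left-hand side. -/
def Deterministic {α : Type} (Δ : Set (α × α × α)) : Prop :=
  ∀ a b c₁ c₂, (a, b, c₁) ∈ Δ → (a, b, c₂) ∈ Δ → c₁ = c₂

/-- `L` is recognised by some GNFSTA over the alphabet `Sa`. -/
def RecogG (Sa : Set U) (L : Set (List (TSym U))) : Prop :=
  ∃ Q Qf Q0 Δ γ, GWF Sa Q Qf Q0 Δ γ ∧ GLang Sa Q0 Δ γ Qf = L

/-- `L` is recognised by some NFSTA over the alphabet `Sa`. -/
def RecogN (Sa : Set U) (L : Set (List (TSym U))) : Prop :=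
  ∃ Q Qf q0 Δ, NWF Sa Q Qf q0 Δ ∧ NLang Sa q0 Δ Qf = L

/-- `L` is recognised, after the injective alphabet renaming `a ↦ {a}`,
by some deterministic FSTA. -/
def RecogD (Sa : Set U) (L : Set (List (TSym U))) : Prop :=
  ∃ (Q' Qf' : Set (Set U)) (q0' : Set U) (Δ' : Set (Set U × Set U × Set U)),
    NWF (sing '' Sa) Q' Qf' q0' Δ' ∧ Deterministic Δ' ∧
    NLang (sing '' Sa) q0' Δ' Qf' = treeRel sing '' L

/-- Runs of a classical finite (string) automaton with transition map `δ`. -/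
inductive FASteps (δ : U → U → Set U) : U → List U → U → Prop where
  | nil (q : U) : FASteps δ q [] q
  | cons {q a p s q'} : p ∈ δ q a → FASteps δ p s q' → FASteps δ q (a :: s) q'

/-- The language of a classical finite automaton `(Sa, Q, Q_f, q₀, δ)`. -/
def FALang (Sa : Set U) (δ : U → U → Set U) (q0 : U) (Qf : Set U) : Set (List U) :=
  {s | (∀ a ∈ s, a ∈ Sa) ∧ ∃ qf ∈ Qf, FASteps δ q0 s qf}

/-- `n`-fold composition of a relation: `relPow r n a b` iff `a ⇒ⁿ b`. -/
def relPow {α : Type} (r : α → α → Prop) : ℕ → α → α → Prop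
  | 0, a, b => a = b
  | n + 1, a, c => ∃ b, r a b ∧ relPow r n b c


/-! Ranked terms and classical tree automata. -/

/-- Unranked terms (rose trees) over a symbol type `F`. -/
inductive PreTerm (F : Type) : Type where
  | node : F → List (PreTerm F) → PreTerm F

/-- A term is well-ranked w.r.t. an arity function. -/
inductive WellRanked {F : Type} (ar : F → ℕ) : PreTerm F → Prop where
  | node {f : F} {ts : List (PreTerm F)} : ts.length = ar f →
      (∀ t ∈ ts, WellRanked ar t) → WellRanked ar (PreTerm.node f ts)

/-- The term-to-string-tree map `τ`:
`τ(f(t₁,…,t_p)) = ⟨f τ(t₁) ⋯ τ(t_p)⟩` (and `τ(a) = ⟨a⟩` for constants). -/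
def tau {F : Type} : PreTerm F → List (TSym F)
  | PreTerm.node f ts =>
      TSym.op :: TSym.ltr f :: ((ts.attach.map (fun x => tau x.1)).flatten ++ [TSym.cl])
  decreasing_by
    simp only [PreTerm.node.sizeOf_spec]
    have h := List.sizeOf_lt_of_mem x.2
    omega

/-- A term over the ranked alphabet given by symbols `Sa` and arities `ar`. -/
inductive GoodTerm (Sa : Set U) (ar : U → ℕ) : PreTerm U → Prop where
  | node {f : U} {ts : List (PreTerm U)} : f ∈ Sa → ts.length = ar f →
      (∀ t ∈ ts, GoodTerm Sa ar t) → GoodTerm Sa ar (PreTerm.node f ts)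

/-- Bottom-up runs of a classical tree automaton with rules
`f(q₁,…,qₙ) → q`: `CRun Δh t q` means the run assigns state `q` to `t`. -/
inductive CRun (Δh : Set (U × List U × U)) : PreTerm U → U → Prop where
  | node {f : U} {ts : List (PreTerm U)} {qs : List U} {q : U} :
      (f, qs, q) ∈ Δh → qs.length = ts.length →
      (∀ p ∈ ts.zip qs, CRun Δh p.1 p.2) →
      CRun Δh (PreTerm.node f ts) q

/-- The term language of a classical tree automaton. -/
def TermLang (Sa : Set U) (ar : U → ℕ) (Δh : Set (U × List U × U)) (Qhf : Set U) :
    Set (PreTerm U) :=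
  {t | GoodTerm Sa ar t ∧ ∃ q ∈ Qhf, CRun Δh t q}

/-! Vertical tree representation of strings. -/

def omegaRev : List U → List (TSym U)
  | [] => [TSym.op, TSym.cl]
  | a :: s => TSym.op :: (omegaRev s ++ [TSym.ltr a, TSym.cl])

/-- The vertical tree representation `ω(a₁⋯aₙ) = ⟨⟨⋯⟨⟩a₁⟩a₂⟩⋯aₙ⟩`,
defined by `ω(ε) = ⟨⟩` and `ω(sa) = ⟨ω(s)⟩·⟨a⟩`. -/
def omega (s : List U) : List (TSym U) := omegaRev s.reverse

/-! Regular string tree grammars. -/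

/-- A regular expression is over the symbol set `S`. -/
def REOver (S : Set U) : RegularExpression U → Prop
  | RegularExpression.zero => True
  | RegularExpression.epsilon => True
  | RegularExpression.char a => a ∈ S
  | RegularExpression.plus e₁ e₂ => REOver S e₁ ∧ REOver S e₂
  | RegularExpression.comp e₁ e₂ => REOver S e₁ ∧ REOver S e₂
  | RegularExpression.star e => REOver S e

/-- One derivation step of a regular string tree grammar with rule set `R`:
`lXr →_G l⟨x⟩r` whenever `X → ⟨e⟩ ∈ R` and `x ∈ ⟦e⟧`. -/
def GDeriv (R : Set (U × RegularExpression U)) (u v : List (TSym U)) : Prop :=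
  ∃ (l r : List (TSym U)) (X : U) (e : RegularExpression U) (x : List U),
    (X, e) ∈ R ∧ x ∈ e.matches' ∧
    u = l ++ [TSym.ltr X] ++ r ∧ v = l ++ (TSym.op :: (strOf x ++ [TSym.cl])) ++ r

/-- The language generated by a regular string tree grammar with axiom `S`:
all trees of `T(Σ)` derivable from `S`. -/
def GramLang (Sa : Set U) (S : U) (R : Set (U × RegularExpression U)) :
    Set (List (TSym U)) :=
  {t | t ∈ TreeSet Sa ∧ Relation.ReflTransGen (GDeriv R) [TSym.ltr S] t}

/-- Well-formedness of a regular string tree grammar `(Σ, N, S, R)`. -/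
def GramWF (Sa N : Set U) (S : U) (R : Set (U × RegularExpression U)) : Prop :=
  N.Finite ∧ Disjoint N Sa ∧ S ∈ N ∧ ∀ p ∈ R, p.1 ∈ N ∧ REOver (Sa ∪ N) p.2

/-! The map `Γ` and the instance relation `⊴` of the subset-construction
equivalence proof. -/

/-- `Γ` applies (the extension of) `γ` to every set-symbol that is not
immediately followed by a slash:
`Γ(ε)=ε`, `Γ(⟨s)=⟨Γ(s)`, `Γ(⟩s)=⟩Γ(s)`, `Γ(a/s)=a/Γ(s)`, `Γ(as)=γ(a)Γ(s)`. -/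
def GammaMap (g : Set U → Set U) : List (TSym (Set U)) → List (TSym (Set U))
  | [] => []
  | TSym.op :: s => TSym.op :: GammaMap g s
  | TSym.cl :: s => TSym.cl :: GammaMap g s
  | TSym.slash :: s => TSym.slash :: GammaMap g s
  | TSym.ltr a :: TSym.slash :: s => TSym.ltr a :: TSym.slash :: GammaMap g s
  | TSym.ltr a :: s => TSym.ltr (g a) :: GammaMap g s

/-- Symbol-wise instance relation: brackets and slashes match, and a plain
symbol is an element of the corresponding set-symbol. -/
inductive SymInst : TSym U → TSym (Set U) → Prop where
  | op : SymInst TSym.op TSym.op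
  | cl : SymInst TSym.cl TSym.cl
  | slash : SymInst TSym.slash TSym.slash
  | ltr {a : U} {A : Set U} : a ∈ A → SymInst (TSym.ltr a) (TSym.ltr A)

/-- `v ⊴ v'`: `v` is an instance of `v'`. -/
def Inst (v : List (TSym U)) (v' : List (TSym (Set U))) : Prop :=
  List.Forall₂ SymInst v v'

end StringTree

namespace StringTree

variable {U : Type}

/-- Bracket weight of a symbol. -/
def wt : TSym U → ℤ
  | TSym.op => 1
  | TSym.cl => -1
  | _ => 0

/-- Bracket balance of a string. -/
def bal (l : List (TSym U)) : ℤ := (l.map wt).sum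

lemma bal_append (a b : List (TSym U)) : bal (a ++ b) = bal a + bal b := by
  simp [bal]

lemma bal_cons (x : TSym U) (l : List (TSym U)) : bal (x :: l) = wt x + bal l := by
  simp [bal]

@[simp] lemma wt_op : wt (TSym.op : TSym U) = 1 := rfl
@[simp] lemma wt_cl : wt (TSym.cl : TSym U) = -1 := rfl

/-- Balance property of trees. -/
def TB (t : List (TSym U)) : Prop :=
  bal t = 0 ∧ ∀ p q : List (TSym U), t = p ++ q → p ≠ [] → q ≠ [] → 1 ≤ bal p

lemma TB_inner {x p : List (TSym U)} (h : TB (TSym.op :: (x ++ [TSym.cl])))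
    (hp : p <+: x) : 0 ≤ bal p := by
  rcases hp with ⟨r, rfl⟩
  rcases eq_or_ne p [] with rfl | hne
  · simp [bal]
  · have h1 := h.2 (TSym.op :: p) (r ++ [TSym.cl]) (by simp) (by simp) (by simp)
    rw [bal_cons] at h1
    simp only [wt] at h1
    linarith

lemma bal_wrap (x : List (TSym U)) :
    bal (TSym.op :: (x ++ [TSym.cl])) = bal x := by
  rw [bal_cons, bal_append]
  simp [bal, wt]

lemma tree_TB {S : Set (TSym U)} (hS : ∀ x ∈ S, wt x = 0) {t : List (TSym U)}
    (h : IsTree S t) : TB t := by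
  induction h with
  | nil =>
    refine ⟨by simp [bal], ?_⟩
    intro p q hpq hp hq
    rcases p with _ | ⟨a, _ | ⟨b, p⟩⟩
    · exact absurd rfl hp
    · simp only [List.cons_append, List.nil_append, List.cons.injEq] at hpq
      obtain ⟨rfl, rfl⟩ := hpq
      simp [bal]
    · exfalso
      simp only [List.cons_append, List.cons.injEq] at hpq
      obtain ⟨rfl, rfl, hpq⟩ := hpq
      exact hq (List.append_eq_nil_iff.mp hpq.symm).2
  | @single x hx =>
    have hwx : wt x = 0 := hS x hx
    refine ⟨by simp [bal, hwx], ?_⟩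
    intro p q hpq hp hq
    rcases p with _ | ⟨a, _ | ⟨b, _ | ⟨c, p⟩⟩⟩
    · exact absurd rfl hp
    · simp only [List.cons_append, List.nil_append, List.cons.injEq] at hpq
      obtain ⟨rfl, rfl⟩ := hpq
      simp [bal]
    · simp only [List.cons_append, List.nil_append, List.cons.injEq] at hpq
      obtain ⟨rfl, rfl, rfl⟩ := hpq
      simp [bal, hwx]
    · exfalso
      simp only [List.cons_append, List.cons.injEq] at hpq
      obtain ⟨rfl, rfl, rfl, hpq⟩ := hpq
      exact hq (List.append_eq_nil_iff.mp hpq.symm).2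
  | @concat x y h1 h2 ih1 ih2 =>
    have hx : bal x = 0 := by have := ih1.1; rwa [bal_wrap] at this
    have hy : bal y = 0 := by have := ih2.1; rwa [bal_wrap] at this
    refine ⟨by rw [bal_wrap, bal_append, hx, hy]; ring, ?_⟩
    intro p q hpq hp hq
    rcases p with _ | ⟨a, p'⟩
    · exact absurd rfl hp
    simp only [List.cons_append, List.cons.injEq] at hpq
    obtain ⟨rfl, hpq⟩ := hpq
    have hlen : p'.length ≤ (x ++ y).length := by
      have h0 := congrArg List.length hpq
      simp only [List.length_append, List.length_cons, List.length_nil] at h0 ⊢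
      have hq1 : 1 ≤ q.length := List.length_pos_iff.mpr hq
      omega
    have hpre : p' <+: x ++ y :=
      List.prefix_of_prefix_length_le ⟨q, hpq.symm⟩ ⟨[TSym.cl], rfl⟩ hlen
    have hnn : 0 ≤ bal p' := by
      rcases le_or_gt p'.length x.length with hle | hlt
      · exact TB_inner ih1
          (List.prefix_of_prefix_length_le hpre (x.prefix_append y) hle)
      · have hxp : x <+: p' :=
          List.prefix_of_prefix_length_le (x.prefix_append y) hpre (le_of_lt hlt)
        obtain ⟨p'', rfl⟩ := hxp
        have hp'' : p'' <+: y := by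
          obtain ⟨r, hr⟩ := hpre
          rw [List.append_assoc] at hr
          exact ⟨r, List.append_cancel_left hr⟩
        rw [bal_append, hx]
        simpa using TB_inner ih2 hp''
    rw [bal_cons]
    simp only [wt]
    linarith
  | @encap t0 h ih =>
    refine ⟨by rw [bal_wrap, ih.1], ?_⟩
    intro p q hpq hp hq
    rcases p with _ | ⟨a, p'⟩
    · exact absurd rfl hp
    simp only [List.cons_append, List.cons.injEq] at hpq
    obtain ⟨rfl, hpq⟩ := hpq
    have hlen : p'.length ≤ t0.length := by
      have h0 := congrArg List.length hpq
      simp only [List.length_append, List.length_cons, List.length_nil] at h0 ⊢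
      have hq1 : 1 ≤ q.length := List.length_pos_iff.mpr hq
      omega
    have hpre : p' <+: t0 :=
      List.prefix_of_prefix_length_le ⟨q, hpq.symm⟩ ⟨[TSym.cl], rfl⟩ hlen
    have hnn : 0 ≤ bal p' := by
      obtain ⟨r, rfl⟩ := hpre
      rcases eq_or_ne p' [] with rfl | hne
      · simp [bal]
      rcases eq_or_ne r [] with rfl | hre
      · rw [← ih.1]; simp
      · linarith [ih.2 p' r rfl hne hre]
    rw [bal_cons]
    simp only [wt]
    linarith

lemma tree_struct {S : Set (TSym U)} {t : List (TSym U)} (h : IsTree S t) :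
    ∃ x, t = TSym.op :: (x ++ [TSym.cl]) := by
  cases h with
  | nil => exact ⟨[], rfl⟩
  | single hx => exact ⟨[_], rfl⟩
  | concat h1 h2 => exact ⟨_, rfl⟩
  | encap h => exact ⟨_, rfl⟩

lemma ltrs_wt (Sa : Set U) : ∀ x ∈ ltrs Sa, wt x = 0 := by
  rintro x ⟨a, _, rfl⟩; rfl

lemma tree_prefix_unique {S S' : Set (TSym U)}
    (hS : ∀ x ∈ S, wt x = 0) (hS' : ∀ x ∈ S', wt x = 0)
    {t t' u u' : List (TSym U)} (h : IsTree S t) (h' : IsTree S' t')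
    (heq : t ++ u = t' ++ u') : t = t' ∧ u = u' := by
  have key : ∀ (a b v w : List (TSym U)), TB a → TB b → a ≠ [] → a.length ≤ b.length →
      a ++ v = b ++ w → a = b := by
    intro a b v w hta htb hane hlen hvw
    obtain ⟨r, rfl⟩ := List.prefix_of_prefix_length_le ⟨v, hvw⟩ ⟨w, rfl⟩ hlen
    rcases eq_or_ne r [] with rfl | hr
    · simp
    · have h1 := htb.2 a r rfl hane hr
      rw [hta.1] at h1
      omega
  have hta := tree_TB hS h
  have htb := tree_TB hS' h'
  have hane : t ≠ [] := by obtain ⟨x, rfl⟩ := tree_struct h; simp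
  have hbne : t' ≠ [] := by obtain ⟨x, rfl⟩ := tree_struct h'; simp
  have htt : t = t' := by
    rcases Nat.le_total t.length t'.length with hle | hle
    · exact key t t' u u' hta htb hane hle heq
    · exact (key t' t u' u htb hta hbne hle heq.symm).symm
  subst htt
  exact ⟨rfl, List.append_cancel_left heq⟩

/-- The flattened middle part of a representation. -/
def flat (rest : List (List (TSym U) × List U)) : List (TSym U) :=
  (rest.map (fun p => p.1 ++ strOf p.2)).flatten

lemma flatRep_eq (s0 : List U) (rest : List (List (TSym U) × List U)) :
    flatRep s0 rest = TSym.op :: (strOf s0 ++ flat rest ++ [TSym.cl]) := rfl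

lemma exists_rep {Sa : Set U} {t : List (TSym U)} (h : IsTree (ltrs Sa) t) :
    ∃ p : List U × List (List (TSym U) × List U),
      ((∀ a ∈ p.1, a ∈ Sa) ∧ ∀ q ∈ p.2, q.1 ∈ TreeSet Sa ∧ ∀ a ∈ q.2, a ∈ Sa) ∧
      t = flatRep p.1 p.2 := by
  induction h with
  | nil =>
    exact ⟨([], []), ⟨by simp, by simp⟩, by simp [flatRep, strOf]⟩
  | @single x hx =>
    obtain ⟨a, ha, rfl⟩ := hx
    exact ⟨([a], []), ⟨by simpa, by simp⟩, by simp [flatRep, strOf]⟩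
  | @concat x y h1 h2 ih1 ih2 =>
    obtain ⟨⟨s0, rest⟩, ⟨hg1, hg2⟩, he⟩ := ih1
    obtain ⟨⟨s0', rest'⟩, ⟨hg1', hg2'⟩, he'⟩ := ih2
    rw [flatRep_eq] at he he'
    have hx : x = strOf s0 ++ flat rest := by
      have := he
      simp only [List.cons.injEq, List.append_left_inj] at this
      exact this.2
    have hy : y = strOf s0' ++ flat rest' := by
      have := he'
      simp only [List.cons.injEq, List.append_left_inj] at this
      exact this.2
    rcases List.eq_nil_or_concat rest with rfl | ⟨init, ⟨tl, sl⟩, rfl⟩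
    · refine ⟨(s0 ++ s0', rest'), ⟨?_, hg2'⟩, ?_⟩
      · intro a ha
        rcases List.mem_append.mp ha with ha | ha
        · exact hg1 a ha
        · exact hg1' a ha
      · rw [flatRep_eq]
        simp only [flat, List.flatten_nil, List.append_nil] at hx
        rw [hx, hy]
        simp [strOf, List.append_assoc]
    · refine ⟨(s0, init ++ [(tl, sl ++ s0')] ++ rest'), ⟨hg1, ?_⟩, ?_⟩
      · rintro ⟨qt, qs⟩ hq
        simp only [List.concat_eq_append, List.append_assoc, List.mem_append,
          List.mem_singleton, List.mem_cons, Prod.mk.injEq] at hq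
        rcases hq with hq | (⟨rfl, rfl⟩ | h0) | hq2
        · exact hg2 (qt, qs) (by simp [hq])
        · refine ⟨(hg2 (qt, sl) (by simp)).1, ?_⟩
          intro a ha
          rcases List.mem_append.mp ha with ha | ha
          · exact (hg2 (qt, sl) (by simp)).2 a ha
          · exact hg1' a ha
        · exact absurd h0 List.not_mem_nil
        · exact hg2' (qt, qs) hq2
      · rw [flatRep_eq]
        rw [hx, hy]
        simp [flat, strOf, List.append_assoc]
  | @encap t0 h ih =>
    exact ⟨([], [(t0, [])]), ⟨by simp, by simpa [TreeSet] using h⟩, by simp [flatRep, strOf]⟩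

lemma strOf_split {s s' : List U} {u u' : List (TSym U)}
    (hu : u = [] ∨ ∃ v, u = TSym.op :: v) (hu' : u' = [] ∨ ∃ v, u' = TSym.op :: v)
    (h : strOf s ++ u = strOf s' ++ u') : s = s' ∧ u = u' := by
  induction s generalizing s' with
  | nil =>
    cases s' with
    | nil => exact ⟨rfl, by simpa [strOf] using h⟩
    | cons b s' =>
      exfalso
      rcases hu with rfl | ⟨v, rfl⟩ <;> simp [strOf] at h
  | cons a s ih =>
    cases s' with
    | nil =>
      exfalso
      rcases hu' with rfl | ⟨v, rfl⟩ <;> simp [strOf] at h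
    | cons b s' =>
      simp only [strOf, List.map_cons, List.cons_append, List.cons.injEq,
        TSym.ltr.injEq] at h
      obtain ⟨rfl, h⟩ := h
      obtain ⟨rfl, rfl⟩ := ih h
      exact ⟨rfl, rfl⟩

lemma flat_head {Sa : Set U} {rest : List (List (TSym U) × List U)}
    (hrest : ∀ q ∈ rest, q.1 ∈ TreeSet Sa) :
    flat rest = [] ∨ ∃ v, flat rest = TSym.op :: v := by
  cases rest with
  | nil => left; rfl
  | cons q rs =>
    right
    obtain ⟨x, hx⟩ := tree_struct (hrest q (by simp))
    refine ⟨(x ++ [TSym.cl]) ++ strOf q.2 ++ flat rs, ?_⟩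
    simp [flat, hx]

lemma flat_unique {Sa : Set U} {rest rest' : List (List (TSym U) × List U)}
    (h1 : ∀ q ∈ rest, q.1 ∈ TreeSet Sa) (h2 : ∀ q ∈ rest', q.1 ∈ TreeSet Sa)
    (h : flat rest = flat rest') : rest = rest' := by
  induction rest generalizing rest' with
  | nil =>
    cases rest' with
    | nil => rfl
    | cons q rs =>
      exfalso
      obtain ⟨x, hx⟩ := tree_struct (h2 q (by simp))
      simp [flat, hx] at h
  | cons q rs ih =>
    cases rest' with
    | nil =>
      exfalso
      obtain ⟨x, hx⟩ := tree_struct (h1 q (by simp))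
      simp [flat, hx] at h
    | cons q' rs' =>
      have hq : IsTree (ltrs Sa) q.1 := h1 q (by simp)
      have hq' : IsTree (ltrs Sa) q'.1 := h2 q' (by simp)
      have h' : q.1 ++ (strOf q.2 ++ flat rs) = q'.1 ++ (strOf q'.2 ++ flat rs') := by
        simpa [flat, List.append_assoc] using h
      obtain ⟨e1, e2⟩ := tree_prefix_unique (ltrs_wt Sa) (ltrs_wt Sa) hq hq' h'
      obtain ⟨e3, e4⟩ := strOf_split
        (flat_head (fun r hr => h1 r (by simp [hr])))
        (flat_head (fun r hr => h2 r (by simp [hr]))) e2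
      have e5 := ih (fun r hr => h1 r (by simp [hr])) (fun r hr => h2 r (by simp [hr])) e4
      cases q; cases q'
      simp_all

end StringTree

namespace StringTree

theorem unique_representation' {U : Type} (Sa : Set U) (hSa : Sa.Finite)
    (t : List (TSym U)) (ht : t ∈ TreeSet Sa) :
    ∃! p : List U × List (List (TSym U) × List U),
      ((∀ a ∈ p.1, a ∈ Sa) ∧ ∀ q ∈ p.2, q.1 ∈ TreeSet Sa ∧ ∀ a ∈ q.2, a ∈ Sa) ∧
      t = flatRep p.1 p.2 := by
  obtain ⟨p, hp, hrep⟩ := exists_rep ht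
  refine ⟨p, ⟨hp, hrep⟩, ?_⟩
  rintro ⟨s0', rest'⟩ ⟨⟨hg1', hg2'⟩, hrep'⟩
  obtain ⟨s0, rest⟩ := p
  obtain ⟨hg1, hg2⟩ := hp
  rw [flatRep_eq] at hrep hrep'
  rw [hrep] at hrep'
  simp only [List.cons.injEq, List.append_left_inj, true_and] at hrep'
  obtain ⟨e1, e2⟩ := strOf_split
    (flat_head (rest := rest) (fun r hr => (hg2 r hr).1))
    (flat_head (rest := rest') (fun r hr => (hg2' r hr).1)) hrep'
  have e3 := flat_unique (fun r hr => (hg2 r hr).1) (fun r hr => (hg2' r hr).1) e2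
  exact Prod.ext e1.symm e3.symm

end StringTree

namespace StringTree

/-- Every string tree `t ∈ T(Σ)` admits a unique representation
`t = ⟨s₀ t₁ s₁ t₂ s₂ ⋯ tₙ sₙ⟩` where `n ≥ 0`, each `sᵢ` is a (possibly empty)
string over `Σ`, and each `tᵢ ∈ T(Σ)`. -/
theorem unique_representation {U : Type} (Sa : Set U) (hSa : Sa.Finite)
    (t : List (TSym U)) (ht : t ∈ TreeSet Sa) :
    ∃! p : List U × List (List (TSym U) × List U),
      ((∀ a ∈ p.1, a ∈ Sa) ∧ ∀ q ∈ p.2, q.1 ∈ TreeSet Sa ∧ ∀ a ∈ q.2, a ∈ Sa) ∧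
      t = flatRep p.1 p.2 :=
  unique_representation' Sa hSa t ht

end StringTree
end

section
/- Locality of GNFSTA runs: let A be a GNFSTA accepting a tree t₀, and let t be a non-final intermediate tree of a successful run, i.e. t₀ ⇒* t ⇒ⁿ ⟨q_f/⟩ for some n ≥ 1 and q_f ∈ Q_f. If t consists of more than one label, then for ANY representation t = ⟨x⟨w⟩y⟩ in which ⟨w⟩ is a leaf label (w a string over Q ∪ {/}), there exists v — either v = ⟨w'⟩ with w' a string over Q ∪ {/}, or v = q with q ∈ Q — such that t ⇒ ⟨xvy⟩ ⇒* ⟨q_f/⟩. -/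
namespace StringTree

variable {U : Type}

private lemma no_cl_cancel {mid w r r' : List (TSym U)}
    (hm : TSym.cl ∉ mid) (hw : TSym.cl ∉ w)
    (h : mid ++ TSym.cl :: r = w ++ TSym.cl :: r') : mid = w ∧ r = r' := by
  induction mid generalizing w with
  | nil =>
    cases w with
    | nil => simpa using h
    | cons a w' =>
      simp only [List.nil_append, List.cons_append, List.cons.injEq] at h
      exact absurd (h.1 ▸ List.mem_cons_self (a := a) (l := w')) hw
  | cons c mid' ih =>
    cases w with
    | nil =>
      simp only [List.nil_append, List.cons_append, List.cons.injEq] at h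
      exact absurd (h.1 ▸ List.mem_cons_self (a := c) (l := mid')) hm
    | cons d w' =>
      simp only [List.cons_append, List.cons.injEq] at h
      obtain ⟨rfl, h2⟩ := h
      obtain ⟨h3, h4⟩ := ih (fun hc => hm (List.mem_cons_of_mem _ hc))
        (fun hc => hw (List.mem_cons_of_mem _ hc)) h2
      exact ⟨by rw [h3], h4⟩

private lemma concat_inj {a b : List (TSym U)} {x y : TSym U}
    (h : a ++ [x] = b ++ [y]) : x = y := by
  have hl : a.length = b.length := by
    have := congrArg List.length h; simpa using this
  have := (List.append_inj h hl).2
  simpa using this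

private lemma redex_cases {l r x y w mid : List (TSym U)}
    (hmop : TSym.op ∉ mid) (hmcl : TSym.cl ∉ mid)
    (hwop : TSym.op ∉ w) (hwcl : TSym.cl ∉ w)
    (he : l ++ (TSym.op :: mid ++ [TSym.cl]) ++ r
        = TSym.op :: (x ++ (TSym.op :: w ++ [TSym.cl]) ++ y ++ [TSym.cl])) :
    (l = TSym.op :: x ∧ mid = w ∧ r = y ++ [TSym.cl]) ∨
    (∃ m, TSym.op :: x = l ++ (TSym.op :: mid ++ [TSym.cl]) ++ m ∧
      r = m ++ (TSym.op :: w ++ [TSym.cl]) ++ y ++ [TSym.cl]) ∨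
    (∃ yl, l = TSym.op :: (x ++ (TSym.op :: w ++ [TSym.cl]) ++ yl) ∧
      y ++ [TSym.cl] = yl ++ (TSym.op :: mid ++ [TSym.cl]) ++ r) := by
  have he' : l ++ ((TSym.op :: mid ++ [TSym.cl]) ++ r)
      = (TSym.op :: x) ++ ((TSym.op :: w ++ [TSym.cl]) ++ (y ++ [TSym.cl])) := by
    simpa [List.append_assoc] using he
  -- key fact used twice: if the redex starts exactly where the leaf starts
  have main_case : ∀ r₁ : List (TSym U),
      TSym.op :: mid ++ [TSym.cl] ++ r₁ = (TSym.op :: w ++ [TSym.cl]) ++ (y ++ [TSym.cl]) →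
      mid = w ∧ r₁ = y ++ [TSym.cl] := by
    intro r₁ hh
    have hh' : mid ++ TSym.cl :: r₁ = w ++ TSym.cl :: (y ++ [TSym.cl]) := by
      have := hh
      simp only [List.cons_append, List.append_assoc, List.singleton_append,
        List.cons.injEq] at this
      simpa using this
    exact no_cl_cancel hmcl hwcl hh'
  rcases List.append_eq_append_iff.mp he' with ⟨a', hx, hr⟩ | ⟨c', hl, hr⟩
  · rcases List.append_eq_append_iff.mp hr with ⟨b', ha', hr2⟩ | ⟨c2, hred, hr2⟩
    · refine Or.inr (Or.inl ⟨b', ?_, ?_⟩)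
      · rw [hx, ha']; simp [List.append_assoc]
      · simpa [List.append_assoc] using hr2
    · cases c2 with
      | nil =>
        refine Or.inr (Or.inl ⟨[], ?_, ?_⟩)
        · rw [hx, hred]; simp
        · simpa [List.append_assoc] using hr2.symm
      | cons e c2' =>
        have he2 : e = TSym.op := by
          have h0 := congrArg List.head? hr2
          simp only [List.cons_append, List.head?_cons, List.append_assoc] at h0
          exact (Option.some.injEq _ _ ▸ h0).symm ▸ rfl
        subst he2
        have ha0 : a' = [] := by
          cases a' with
          | nil => rfl
          | cons f a'' =>
            exfalso
            have h0 : TSym.op ∈ mid ++ [TSym.cl] := by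
              have h1 := hred
              simp only [List.cons_append, List.cons.injEq] at h1
              rw [h1.2]
              simp
            rcases List.mem_append.mp h0 with h1 | h1
            · exact hmop h1
            · simp at h1
        subst ha0
        have hl0 : l = TSym.op :: x := by
          have := hx
          simpa using this.symm
        have hmain := main_case r (by
          have hred' : TSym.op :: mid ++ [TSym.cl] = TSym.op :: c2' := by
            simpa using hred
          rw [hred']
          exact hr2.symm)
        exact Or.inl ⟨hl0, hmain.1, hmain.2⟩
  · rcases List.append_eq_append_iff.mp hr with ⟨a', hc', hr2⟩ | ⟨c2, hleaf, hr2⟩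
    · refine Or.inr (Or.inr ⟨a', ?_, ?_⟩)
      · rw [hl, hc']; simp [List.append_assoc]
      · simpa [List.append_assoc] using hr2
    · cases c2 with
      | nil =>
        refine Or.inr (Or.inr ⟨[], ?_, ?_⟩)
        · rw [hl, hleaf]; simp [List.append_assoc]
        · simpa [List.append_assoc] using hr2.symm
      | cons e c2' =>
        have he2 : e = TSym.op := by
          have h0 := congrArg List.head? hr2
          simp only [List.cons_append, List.head?_cons, List.append_assoc] at h0
          exact (Option.some.injEq _ _ ▸ h0) ▸ rfl
        subst he2
        have hc0 : c' = [] := by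
          cases c' with
          | nil => rfl
          | cons f c'' =>
            exfalso
            have h0 : TSym.op ∈ w ++ [TSym.cl] := by
              have h1 := hleaf
              simp only [List.cons_append, List.cons.injEq] at h1
              rw [h1.2]
              simp
            rcases List.mem_append.mp h0 with h1 | h1
            · exact hwop h1
            · simp at h1
        subst hc0
        have hl0 : l = TSym.op :: x := by simpa using hl
        have hmain := main_case r (by
          have hleaf' : TSym.op :: w ++ [TSym.cl] = TSym.op :: c2' := by
            simpa using hleaf
          rw [hleaf']
          exact hr2)
        exact Or.inl ⟨hl0, hmain.1, hmain.2⟩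

private lemma gmove_decomp {Q Q0 : Set U} {Δ : Set (U × U × U)} {γ : U → Set U}
    (hQ0 : Q0 ⊆ Q) (hΔ : ∀ p ∈ Δ, p.1 ∈ Q ∧ p.2.1 ∈ Q ∧ p.2.2 ∈ Q)
    (hγ : ∀ q ∈ Q, γ q ⊆ Q)
    {u u' : List (TSym U)} (h : GMove Q0 Δ γ u u') :
    ∃ l mid red r,
      u = l ++ (TSym.op :: mid ++ [TSym.cl]) ++ r ∧
      u' = l ++ red ++ r ∧
      TSym.op ∉ mid ∧ TSym.cl ∉ mid ∧
      (∀ L R : List (TSym U),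
        GMove Q0 Δ γ (L ++ (TSym.op :: mid ++ [TSym.cl]) ++ R) (L ++ red ++ R)) ∧
      (OverQSlash Q mid →
        ((∃ w', OverQSlash Q w' ∧ red = TSym.op :: w' ++ [TSym.cl]) ∨
          (∃ q ∈ Q, red = [TSym.ltr q]))) ∧
      ((∃ rm, red = TSym.op :: rm ++ [TSym.cl]) ∨ (∃ q : U, red = [TSym.ltr q])) := by
  cases h with
  | @init l r s a ha =>
    refine ⟨l, strOf s, TSym.op :: (TSym.ltr a :: TSym.slash :: strOf s) ++ [TSym.cl], r,
      by simp [List.append_assoc], by simp [List.append_assoc], by simp [strOf],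
      by simp [strOf], ?_, ?_, Or.inl ⟨_, rfl⟩⟩
    · intro L R
      have h0 := GMove.init (Q0 := Q0) (Δ := Δ) (γ := γ) (l := L) (r := R) (s := s) ha
      simpa [List.append_assoc] using h0
    · intro hm
      refine Or.inl ⟨TSym.ltr a :: TSym.slash :: strOf s, ?_, rfl⟩
      intro z hz
      rcases List.mem_cons.mp hz with rfl | hz'
      · exact Or.inr ⟨a, hQ0 ha, rfl⟩
      rcases List.mem_cons.mp hz' with rfl | hz''
      · exact Or.inl rfl
      · exact hm z hz''
  | @horiz l r s a b c hrule =>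
    refine ⟨l, TSym.ltr a :: TSym.slash :: TSym.ltr b :: strOf s,
      TSym.op :: (TSym.ltr c :: TSym.slash :: strOf s) ++ [TSym.cl], r,
      by simp [List.append_assoc], by simp [List.append_assoc], by simp [strOf],
      by simp [strOf], ?_, ?_, Or.inl ⟨_, rfl⟩⟩
    · intro L R
      have h0 := GMove.horiz (Q0 := Q0) (γ := γ) (l := L) (r := R) (s := s) hrule
      simpa [List.append_assoc] using h0
    · intro hm
      refine Or.inl ⟨TSym.ltr c :: TSym.slash :: strOf s, ?_, rfl⟩
      intro z hz
      rcases List.mem_cons.mp hz with rfl | hz'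
      · exact Or.inr ⟨c, (hΔ _ hrule).2.2, rfl⟩
      rcases List.mem_cons.mp hz' with rfl | hz''
      · exact Or.inl rfl
      · exact hm z (by simp [hz''])
  | @vert l r a b hb =>
    refine ⟨l, [TSym.ltr a, TSym.slash], [TSym.ltr b], r,
      by simp [List.append_assoc], by simp [List.append_assoc], by simp,
      by simp, ?_, ?_, Or.inr ⟨b, rfl⟩⟩
    · intro L R
      have h0 := GMove.vert (Q0 := Q0) (Δ := Δ) (l := L) (r := R) hb
      simpa [List.append_assoc] using h0
    · intro hm
      have haQ : a ∈ Q := by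
        rcases hm (TSym.ltr a) (by simp) with h1 | ⟨q, hq, h2⟩
        · exact absurd h1 (by simp)
        · rw [show a = q by injection h2]; exact hq
      exact Or.inr ⟨b, hγ a haQ hb, rfl⟩

private lemma step_head {Q0 : Set U} {Δ : Set (U × U × U)} {γ : U → Set U}
    {u u' : List (TSym U)} (h : GMove Q0 Δ γ u u') {c : TSym U} {u₀ : List (TSym U)}
    (hu : u = c :: u₀) (hc : c ≠ TSym.op) : ∃ u₁, u' = c :: u₁ := by
  obtain ⟨l, mid, red, r, h1, h2, -, -, -, -, -⟩ :=
    gmove_decomp (Q := (Set.univ : Set U)) (fun _ _ => trivial)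
      (fun p _ => ⟨trivial, trivial, trivial⟩) (fun q _ _ _ => trivial) h
  cases l with
  | nil =>
    exfalso
    apply hc
    have h3 := hu.symm.trans h1
    simp only [List.nil_append, List.cons_append, List.cons.injEq] at h3
    exact h3.1
  | cons d l' =>
    have h3 := hu.symm.trans h1
    simp only [List.cons_append, List.cons.injEq, List.append_assoc] at h3
    refine ⟨l' ++ red ++ r, ?_⟩
    rw [h2, h3.1]
    simp [List.append_assoc]

private lemma step_last {Q0 : Set U} {Δ : Set (U × U × U)} {γ : U → Set U}
    {u u' : List (TSym U)} (h : GMove Q0 Δ γ u u') {c : TSym U} {u₀ : List (TSym U)}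
    (hu : u = u₀ ++ [c]) (hc : c ≠ TSym.cl) : ∃ u₁, u' = u₁ ++ [c] := by
  obtain ⟨l, mid, red, r, h1, h2, -, -, -, -, -⟩ :=
    gmove_decomp (Q := (Set.univ : Set U)) (fun _ _ => trivial)
      (fun p _ => ⟨trivial, trivial, trivial⟩) (fun q _ _ _ => trivial) h
  rcases List.eq_nil_or_concat r with rfl | ⟨r₀, d, rfl⟩
  · exfalso
    apply hc
    have h3 : u₀ ++ [c] = (l ++ (TSym.op :: mid)) ++ [TSym.cl] := by
      rw [← hu, h1]; simp [List.append_assoc]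
    exact concat_inj h3
  · have h3 : u₀ ++ [c] = (l ++ (TSym.op :: mid ++ [TSym.cl]) ++ r₀) ++ [d] := by
      rw [← hu, h1]; simp [List.append_assoc]
    have h4 := concat_inj h3
    refine ⟨l ++ red ++ r₀, ?_⟩
    rw [h2, ← h4]
    simp [List.append_assoc]

private lemma rtg_head {Q0 : Set U} {Δ : Set (U × U × U)} {γ : U → Set U} {qf : U}
    {u : List (TSym U)}
    (h : Relation.ReflTransGen (GMove Q0 Δ γ) u (finalTree qf)) :
    ∀ c u₀, u = c :: u₀ → c = TSym.op := by
  induction h using Relation.ReflTransGen.head_induction_on with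
  | refl =>
    intro c u₀ hu
    simp only [finalTree, List.cons.injEq] at hu
    exact hu.1.symm
  | head hstep _ ih =>
    intro c u₀ hu
    by_contra hc
    obtain ⟨u₁, hb⟩ := step_head hstep hu hc
    exact hc (ih c u₁ hb)

private lemma rtg_last {Q0 : Set U} {Δ : Set (U × U × U)} {γ : U → Set U} {qf : U}
    {u : List (TSym U)}
    (h : Relation.ReflTransGen (GMove Q0 Δ γ) u (finalTree qf)) :
    ∀ u₀ c, u = u₀ ++ [c] → c = TSym.cl := by
  induction h using Relation.ReflTransGen.head_induction_on with
  | refl =>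
    intro u₀ c hu
    exact (concat_inj (show u₀ ++ [c] = [TSym.op, TSym.ltr qf, TSym.slash] ++ [TSym.cl]
      from hu.symm)).symm ▸ rfl
  | head hstep _ ih =>
    intro u₀ c hu
    by_contra hc
    obtain ⟨u₁, hb⟩ := step_last hstep hu hc
    exact hc (ih u₁ c hb)

private lemma step_analysis {Q Q0 : Set U} {Δ : Set (U × U × U)} {γ : U → Set U}
    (hQ0 : Q0 ⊆ Q) (hΔ : ∀ p ∈ Δ, p.1 ∈ Q ∧ p.2.1 ∈ Q ∧ p.2.2 ∈ Q)
    (hγ : ∀ q ∈ Q, γ q ⊆ Q)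
    {x y w u : List (TSym U)} (hw : OverQSlash Q w)
    (hstep : GMove Q0 Δ γ
      (TSym.op :: (x ++ (TSym.op :: w ++ [TSym.cl]) ++ y ++ [TSym.cl])) u) :
    (∃ v, ((∃ w', OverQSlash Q w' ∧ v = TSym.op :: w' ++ [TSym.cl]) ∨
        ∃ q ∈ Q, v = [TSym.ltr q]) ∧
      (∀ L R, GMove Q0 Δ γ (L ++ (TSym.op :: w ++ [TSym.cl]) ++ R) (L ++ v ++ R)) ∧
      u = TSym.op :: (x ++ v ++ y ++ [TSym.cl])) ∨
    (∃ P' S', (∀ z, GMove Q0 Δ γ (TSym.op :: (x ++ z ++ y ++ [TSym.cl])) (P' ++ z ++ S')) ∧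
      u = P' ++ (TSym.op :: w ++ [TSym.cl]) ++ S' ∧
      ((∃ x₁ y₁, P' = TSym.op :: x₁ ∧ S' = y₁ ++ [TSym.cl]) ∨
        (∃ c u₀, u = c :: u₀ ∧ c ≠ TSym.op) ∨
        (∃ c u₀, u = u₀ ++ [c] ∧ c ≠ TSym.cl))) := by
  have hwop : TSym.op ∉ w := fun hm => by
    rcases hw _ hm with h1 | ⟨q, _, h1⟩ <;> simp at h1
  have hwcl : TSym.cl ∉ w := fun hm => by
    rcases hw _ hm with h1 | ⟨q, _, h1⟩ <;> simp at h1
  obtain ⟨l, mid, red, r, h1, h2, hmop, hmcl, huniv, hshape, hredshape⟩ :=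
    gmove_decomp hQ0 hΔ hγ hstep
  rcases redex_cases hmop hmcl hwop hwcl h1.symm with
    ⟨hl, hmw, hr⟩ | ⟨m, hx, hr⟩ | ⟨yl, hl, hy⟩
  · -- the move happens exactly at the leaf
    subst hmw
    refine Or.inl ⟨red, hshape hw, huniv, ?_⟩
    rw [h2, hl, hr]
    simp [List.append_assoc]
  · -- the move happens inside `x`
    refine Or.inr ⟨l ++ red ++ m, y ++ [TSym.cl], ?_, ?_, ?_⟩
    · intro z
      have h0 := huniv l (m ++ z ++ (y ++ [TSym.cl]))
      have e1 : TSym.op :: (x ++ z ++ y ++ [TSym.cl])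
          = l ++ (TSym.op :: mid ++ [TSym.cl]) ++ (m ++ z ++ (y ++ [TSym.cl])) := by
        rw [show TSym.op :: (x ++ z ++ y ++ [TSym.cl])
            = (TSym.op :: x) ++ (z ++ y ++ [TSym.cl]) by simp, hx]
        simp [List.append_assoc]
      have e2 : l ++ red ++ m ++ z ++ (y ++ [TSym.cl])
          = l ++ red ++ (m ++ z ++ (y ++ [TSym.cl])) := by
        simp [List.append_assoc]
      rw [e1, e2]
      exact h0
    · rw [h2, hr]; simp [List.append_assoc]
    · cases l with
      | cons d l' =>
        have hd : d = TSym.op := by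
          have := hx
          simp only [List.cons_append, List.cons.injEq, List.append_assoc] at this
          exact this.1.symm
        subst hd
        exact Or.inl ⟨l' ++ red ++ m, y, by simp [List.append_assoc], rfl⟩
      | nil =>
        rcases hredshape with ⟨rm, rfl⟩ | ⟨q, rfl⟩
        · exact Or.inl ⟨rm ++ [TSym.cl] ++ m, y, by simp [List.append_assoc], rfl⟩
        · refine Or.inr (Or.inl ⟨TSym.ltr q,
            m ++ (TSym.op :: w ++ [TSym.cl]) ++ (y ++ [TSym.cl]), ?_, by simp⟩)
          rw [h2, hr]
          simp [List.append_assoc]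
  · -- the move happens inside `y ++ [cl]`
    subst hl
    refine Or.inr ⟨TSym.op :: x, yl ++ red ++ r, ?_, ?_, ?_⟩
    · intro z
      have h0 := huniv (TSym.op :: (x ++ (z ++ yl))) r
      have e1 : TSym.op :: (x ++ z ++ y ++ [TSym.cl])
          = TSym.op :: (x ++ (z ++ yl)) ++ (TSym.op :: mid ++ [TSym.cl]) ++ r := by
        rw [show TSym.op :: (x ++ z ++ y ++ [TSym.cl])
            = TSym.op :: (x ++ (z ++ (y ++ [TSym.cl]))) by simp, hy]
        simp [List.append_assoc]
      have e2 : TSym.op :: x ++ z ++ (yl ++ red ++ r)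
          = TSym.op :: (x ++ (z ++ yl)) ++ red ++ r := by
        simp [List.append_assoc]
      rw [e1, e2]
      exact h0
    · rw [h2]; simp [List.append_assoc]
    · rcases List.eq_nil_or_concat r with rfl | ⟨r₀, d, rfl⟩
      · rcases hredshape with ⟨rm, rfl⟩ | ⟨q, rfl⟩
        · exact Or.inl ⟨x, yl ++ (TSym.op :: rm), rfl, by simp [List.append_assoc]⟩
        · refine Or.inr (Or.inr ⟨TSym.ltr q,
            TSym.op :: (x ++ (TSym.op :: w ++ [TSym.cl]) ++ yl), ?_, by simp⟩)
          rw [h2]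
          simp [List.append_assoc]
      · have hd : d = TSym.cl := by
          have h3 : y ++ [TSym.cl]
              = (yl ++ (TSym.op :: mid ++ [TSym.cl]) ++ r₀) ++ [d] := by
            rw [hy]; simp [List.append_assoc]
          exact (concat_inj h3).symm
        subst hd
        exact Or.inl ⟨x, yl ++ red ++ r₀, rfl, by simp [List.append_assoc]⟩

private lemma locality_aux {Q Q0 : Set U} {Δ : Set (U × U × U)} {γ : U → Set U}
    (hQ0 : Q0 ⊆ Q) (hΔ : ∀ p ∈ Δ, p.1 ∈ Q ∧ p.2.1 ∈ Q ∧ p.2.2 ∈ Q)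
    (hγ : ∀ q ∈ Q, γ q ⊆ Q) {qf : U} {t : List (TSym U)}
    (ht : Relation.TransGen (GMove Q0 Δ γ) t (finalTree qf)) :
    ∀ x y w, OverQSlash Q w →
      t = TSym.op :: (x ++ (TSym.op :: w ++ [TSym.cl]) ++ y ++ [TSym.cl]) →
      ∃ v, ((∃ w', OverQSlash Q w' ∧ v = TSym.op :: w' ++ [TSym.cl]) ∨
          ∃ q ∈ Q, v = [TSym.ltr q]) ∧
        (∀ L R, GMove Q0 Δ γ (L ++ (TSym.op :: w ++ [TSym.cl]) ++ R) (L ++ v ++ R)) ∧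
        Relation.ReflTransGen (GMove Q0 Δ γ)
          (TSym.op :: (x ++ v ++ y ++ [TSym.cl])) (finalTree qf) := by
  induction ht using Relation.TransGen.head_induction_on with
  | single h =>
    intro x y w hw hdec
    subst hdec
    rcases step_analysis hQ0 hΔ hγ hw h with ⟨v, hsh, huniv, hu⟩ | ⟨P', S', hmv, hu, hcor⟩
    · exact ⟨v, hsh, huniv, by rw [← hu]⟩
    · exfalso
      rcases hcor with ⟨x₁, y₁, hP, hS⟩ | ⟨c, u₀, hcu, hne⟩ | ⟨c, u₀, hcu, hne⟩
      · subst hP hS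
        have hm : TSym.op ∈ x₁ ++ (TSym.op :: w ++ [TSym.cl]) ++ (y₁ ++ [TSym.cl]) := by
          simp
        have hu' : ([TSym.ltr qf, TSym.slash, TSym.cl] : List (TSym U))
            = x₁ ++ (TSym.op :: w ++ [TSym.cl]) ++ (y₁ ++ [TSym.cl]) := by
          have := hu
          simp only [finalTree, List.cons_append, List.append_assoc,
            List.cons.injEq] at this
          simpa [List.append_assoc] using this.2
        rw [← hu'] at hm
        simp at hm
      · apply hne
        have := hcu
        simp only [finalTree, List.cons.injEq] at this
        exact this.1.symm
      · apply hne
        exact (concat_inj (show u₀ ++ [c]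
          = [TSym.op, TSym.ltr qf, TSym.slash] ++ [TSym.cl] from hcu.symm)).symm ▸ rfl
  | head h htail IH =>
    intro x y w hw hdec
    subst hdec
    rcases step_analysis hQ0 hΔ hγ hw h with ⟨v, hsh, huniv, hu⟩ | ⟨P', S', hmv, hu, hcor⟩
    · exact ⟨v, hsh, huniv, by rw [← hu]; exact htail.to_reflTransGen⟩
    · rcases hcor with ⟨x₁, y₁, hP, hS⟩ | ⟨c, u₀, hcu, hne⟩ | ⟨c, u₀, hcu, hne⟩
      · subst hP hS
        obtain ⟨v, hsh, huniv, hrtg⟩ := IH x₁ y₁ w hw (by rw [hu]; simp [List.append_assoc])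
        refine ⟨v, hsh, huniv, ?_⟩
        refine Relation.ReflTransGen.head (hmv v) ?_
        have e : TSym.op :: x₁ ++ v ++ (y₁ ++ [TSym.cl])
            = TSym.op :: (x₁ ++ v ++ y₁ ++ [TSym.cl]) := by
          simp [List.append_assoc]
        rw [e]
        exact hrtg
      · exact absurd (rtg_head htail.to_reflTransGen c u₀ hcu) hne
      · exact absurd (rtg_last htail.to_reflTransGen u₀ c hcu) hne

/-- Locality of GNFSTA runs.  Let `A` be a GNFSTA accepting a
tree `t₀`, and let `t` be a non-final intermediate tree of a successful run,
i.e. `t₀ ⇒* t ⇒ⁿ ⟨q_f/⟩` with `n ≥ 1` and `q_f ∈ Q_f`.  Then for ANY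
representation `t = ⟨x⟨w⟩y⟩` in which `⟨w⟩` is a leaf label (`w` a string
over `Q ∪ {/}`), there exists `v` — either `v = ⟨w'⟩` with `w'` a string over
`Q ∪ {/}`, or `v = q` with `q ∈ Q` — such that `t ⇒ ⟨xvy⟩ ⇒* ⟨q_f/⟩`. -/
theorem locality {U : Type} (Sa Q Qf Q0 : Set U) (Δ : Set (U × U × U))
    (γ : U → Set U) (hwf : GWF Sa Q Qf Q0 Δ γ)
    (t0 t : List (TSym U)) (ht0 : t0 ∈ TreeSet Sa)
    (qf : U) (hqf : qf ∈ Qf)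
    (hreach : Relation.ReflTransGen (GMove Q0 Δ γ) t0 t)
    (hsucc : Relation.TransGen (GMove Q0 Δ γ) t (finalTree qf))
    (x y w : List (TSym U)) (hw : OverQSlash Q w)
    (hdec : t = TSym.op :: (x ++ (TSym.op :: (w ++ [TSym.cl])) ++ y ++ [TSym.cl])) :
    ∃ v : List (TSym U),
      ((∃ w', OverQSlash Q w' ∧ v = TSym.op :: (w' ++ [TSym.cl])) ∨
        ∃ q ∈ Q, v = [TSym.ltr q]) ∧
      GMove Q0 Δ γ t (TSym.op :: (x ++ v ++ y ++ [TSym.cl])) ∧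
      Relation.ReflTransGen (GMove Q0 Δ γ)
        (TSym.op :: (x ++ v ++ y ++ [TSym.cl])) (finalTree qf) := by
  obtain ⟨_, _, _, hQ0, hΔ, hγ⟩ := hwf
  obtain ⟨v, hsh, huniv, hrtg⟩ := locality_aux hQ0 hΔ hγ hsucc x y w hw
    (by rw [hdec]; simp [List.append_assoc])
  refine ⟨v, hsh, ?_, hrtg⟩
  have h0 := huniv (TSym.op :: x) (y ++ [TSym.cl])
  have e1 : TSym.op :: x ++ (TSym.op :: w ++ [TSym.cl]) ++ (y ++ [TSym.cl]) = t := by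
    rw [hdec]; simp [List.append_assoc]
  have e2 : TSym.op :: x ++ v ++ (y ++ [TSym.cl])
      = TSym.op :: (x ++ v ++ y ++ [TSym.cl]) := by
    simp [List.append_assoc]
  rw [e1, e2] at h0
  exact h0

end StringTree
end

section
/- For every GNFSTA A = (Σ, Q, Q_f, Q₀, Δ, γ) over Σ there exists a GNFSTA A' with pure states over Σ recognising the same language: L(A') = L(A). Concretely, taking a set of fresh complementary symbols Σ̄ = {ā | a ∈ Σ} disjoint from Q, setting q̄ = q for q ∈ Q∖Σ, Q' = Q ∪ Σ̄, Δ' = ⋃_{(q,r)→p ∈ Δ} {(q̄, r) → p̄, (q̄, r̄) → p̄}, γ'(q̄) = {p̄ | p ∈ γ(q)} for q ∈ Q and γ'(a) = ∅ for a ∈ Σ, the automaton A' = (Σ, Q', Q̄_f, Q̄₀, Δ', γ') has pure states and L(A') = L(A). -/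
namespace StringTree

/-- The rule set `Δ' = ⋃_{(q,r)→p ∈ Δ} {(q̄, r) → p̄, (q̄, r̄) → p̄}` of the
pure-state conversion, where `bar` is the complementation map (already
extended so that `q̄ = q` for `q ∉ Σ`). -/
def barRules {U : Type} (bar : U → U) (Δ : Set (U × U × U)) : Set (U × U × U) :=
  {x | ∃ q b p : U, (q, b, p) ∈ Δ ∧ (x = (bar q, b, bar p) ∨ x = (bar q, bar b, bar p))}

/-- The vertical rules `γ'(q̄) = {p̄ | p ∈ γ(q)}` for `q ∈ Q` (and
`γ'(a) = ∅` for `a ∈ Σ`, which holds automatically since no `q̄` with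
`q ∈ Q` is a symbol of `Σ`). -/
def barGamma {U : Type} (bar : U → U) (Q : Set U) (γ : U → Set U) : U → Set U :=
  fun x => {y | ∃ q ∈ Q, x = bar q ∧ ∃ p ∈ γ q, y = bar p}

section PureAux

variable {U : Type}

/-- Symbol-wise simulation relation between configurations of the original
automaton and configurations of the barred automaton. -/
def RSym (Sa Q : Set U) (bar : U → U) : TSym U → TSym U → Prop
  | TSym.op, TSym.op => True
  | TSym.cl, TSym.cl => True
  | TSym.slash, TSym.slash => True
  | TSym.ltr a, TSym.ltr x => (a ∈ Sa ∧ x = a) ∨ (a ∈ Q ∧ x = bar a)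
  | _, _ => False

/-- Chain invariant: every symbol immediately preceding a slash is barred. -/
def CRel (Q : Set U) (bar : U → U) : TSym U → TSym U → Prop :=
  fun x y => y = TSym.slash → ∃ q ∈ Q, x = TSym.ltr (bar q)

lemma cr_not_slash {Q : Set U} {bar : U → U} {x y : TSym U} (hy : y ≠ TSym.slash) :
    CRel Q bar x y := fun h => absurd h hy

lemma forall₂_splitL {α β : Type} {R : α → β → Prop} :
    ∀ {l₁ l₂ : List α} {w : List β}, List.Forall₂ R (l₁ ++ l₂) w →
      ∃ w₁ w₂, w = w₁ ++ w₂ ∧ List.Forall₂ R l₁ w₁ ∧ List.Forall₂ R l₂ w₂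
  | [], _, w, h => ⟨[], w, rfl, List.Forall₂.nil, h⟩
  | a :: l₁, l₂, _, List.Forall₂.cons hab h =>
      let ⟨w₁, w₂, he, h1, h2⟩ := forall₂_splitL h
      ⟨_ :: w₁, w₂, by rw [he]; rfl, List.Forall₂.cons hab h1, h2⟩

lemma forall₂_splitR {α β : Type} {R : α → β → Prop} :
    ∀ {l₁ l₂ : List β} {w : List α}, List.Forall₂ R w (l₁ ++ l₂) →
      ∃ w₁ w₂, w = w₁ ++ w₂ ∧ List.Forall₂ R w₁ l₁ ∧ List.Forall₂ R w₂ l₂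
  | [], _, w, h => ⟨[], w, rfl, List.Forall₂.nil, h⟩
  | b :: l₁, l₂, _, List.Forall₂.cons hab h =>
      let ⟨w₁, w₂, he, h1, h2⟩ := forall₂_splitR h
      ⟨_ :: w₁, w₂, by rw [he]; rfl, List.Forall₂.cons hab h1, h2⟩

lemma forall₂_consL {α β : Type} {R : α → β → Prop} {a : α} {l : List α} {w : List β}
    (h : List.Forall₂ R (a :: l) w) :
    ∃ b w', w = b :: w' ∧ R a b ∧ List.Forall₂ R l w' := by
  cases h with | cons hab h => exact ⟨_, _, rfl, hab, h⟩

lemma forall₂_consR {α β : Type} {R : α → β → Prop} {b : β} {l : List β} {w : List α}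
    (h : List.Forall₂ R w (b :: l)) :
    ∃ a w', w = a :: w' ∧ R a b ∧ List.Forall₂ R w' l := by
  cases h with | cons hab h => exact ⟨_, _, rfl, hab, h⟩

lemma forall₂_nilL {α β : Type} {R : α → β → Prop} {w : List β}
    (h : List.Forall₂ R [] w) : w = [] := by cases h; rfl

lemma forall₂_nilR {α β : Type} {R : α → β → Prop} {w : List α}
    (h : List.Forall₂ R w []) : w = [] := by cases h; rfl

lemma chain'_mid {α : Type} {R : α → α → Prop} :
    ∀ {xs : List α} {x y : α} {ys : List α}, List.Chain' R (xs ++ x :: y :: ys) → R x y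
  | [], _, _, _, h => (List.isChain_cons_cons.1 h).1
  | _ :: xs, x, y, ys, h => chain'_mid (xs := xs) h.tail

lemma chain'_replace {α : Type} {R : α → α → Prop} {xs m n ys : List α}
    (h : List.Chain' R (xs ++ (m ++ ys))) (hm : m ≠ []) (hn : n ≠ [])
    (hcn : List.Chain' R n)
    (h1 : ∀ x ∈ xs.getLast?, ∀ y ∈ n.head?, R x y)
    (h2 : ∀ x ∈ n.getLast?, ∀ y ∈ ys.head?, R x y) :
    List.Chain' R (xs ++ (n ++ ys)) := by
  rw [List.Chain', List.isChain_append] at h ⊢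
  obtain ⟨hxs, hmys, _⟩ := h
  refine ⟨hxs, List.IsChain.append hcn hmys.right_of_append h2, ?_⟩
  intro x hx y hy
  apply h1 x hx
  cases n with
  | nil => exact absurd rfl hn
  | cons b n' => simpa using hy

section Sim

variable {Sa Q Qf Q0 : Set U} {Δ : Set (U × U × U)} {γ : U → Set U} {bar : U → U}

lemma bar_not_mem_Sa (hSaQ : Sa ⊆ Q) (hid : ∀ q, q ∉ Sa → bar q = q)
    (hfresh : ∀ a ∈ Sa, bar a ∉ Q) (q : U) : bar q ∉ Sa := by
  by_cases hq : q ∈ Sa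
  · intro h; exact hfresh q hq (hSaQ h)
  · rw [hid q hq]; exact hq

lemma bar_injQ (hid : ∀ q, q ∉ Sa → bar q = q)
    (hfresh : ∀ a ∈ Sa, bar a ∉ Q) (hinj : Set.InjOn bar Sa)
    {q₁ q₂ : U} (h1 : q₁ ∈ Q) (h2 : q₂ ∈ Q) (he : bar q₁ = bar q₂) : q₁ = q₂ := by
  by_cases hs1 : q₁ ∈ Sa <;> by_cases hs2 : q₂ ∈ Sa
  · exact hinj hs1 hs2 he
  · rw [hid q₂ hs2] at he; exact absurd (he.symm ▸ h2) (hfresh q₁ hs1)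
  · rw [hid q₁ hs1] at he; exact absurd (he ▸ h1) (hfresh q₂ hs2)
  · rw [hid q₁ hs1, hid q₂ hs2] at he; exact he

lemma barQ_mem (hid : ∀ q, q ∉ Sa → bar q = q) {q : U} (hq : q ∈ Q) :
    bar q ∈ Q ∪ bar '' Sa := by
  by_cases hs : q ∈ Sa
  · exact Or.inr ⟨q, hs, rfl⟩
  · rw [hid q hs]; exact Or.inl hq

variable (hSaQ : Sa ⊆ Q) (hid : ∀ q, q ∉ Sa → bar q = q)
  (hfresh : ∀ a ∈ Sa, bar a ∉ Q) (hinj : Set.InjOn bar Sa)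

include hSaQ hid hfresh hinj in
/-- From a simulation pair at a barred symbol, identify the original state. -/
lemma rs_state {a q : U} (h : RSym Sa Q bar (TSym.ltr a) (TSym.ltr (bar q)))
    (hq : q ∈ Q) : a = q ∧ a ∈ Q := by
  rcases h with ⟨haSa, he⟩ | ⟨haQ, he⟩
  · by_cases hqs : q ∈ Sa
    · exact absurd (he ▸ hSaQ haSa) (hfresh q hqs)
    · rw [hid q hqs] at he; exact ⟨he.symm, he ▸ hq⟩
  · exact ⟨(bar_injQ hid hfresh hinj haQ hq he.symm), haQ⟩

include hSaQ hid hfresh hinj in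
lemma rs_letter {b₁ b : U} (h : RSym Sa Q bar (TSym.ltr b₁) (TSym.ltr b))
    (hb : b ∈ Q) : b₁ = b := by
  rcases h with ⟨_, he⟩ | ⟨hbQ, he⟩
  · exact he.symm
  · by_cases hbs : b₁ ∈ Sa
    · exact absurd (he ▸ hb) (hfresh b₁ hbs)
    · rw [hid b₁ hbs] at he; exact he.symm

lemma rs_opR {x : TSym U} (h : RSym Sa Q bar x TSym.op) : x = TSym.op := by
  cases x <;> simp_all [RSym]

lemma rs_opL {x : TSym U} (h : RSym Sa Q bar TSym.op x) : x = TSym.op := by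
  cases x <;> simp_all [RSym]

lemma rs_clR {x : TSym U} (h : RSym Sa Q bar x TSym.cl) : x = TSym.cl := by
  cases x <;> simp_all [RSym]

lemma rs_clL {x : TSym U} (h : RSym Sa Q bar TSym.cl x) : x = TSym.cl := by
  cases x <;> simp_all [RSym]

lemma rs_slashR {x : TSym U} (h : RSym Sa Q bar x TSym.slash) : x = TSym.slash := by
  cases x <;> simp_all [RSym]

lemma rs_slashL {x : TSym U} (h : RSym Sa Q bar TSym.slash x) : x = TSym.slash := by
  cases x <;> simp_all [RSym]

lemma rs_ltrR {x : TSym U} {b : U} (h : RSym Sa Q bar x (TSym.ltr b)) :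
    ∃ a, x = TSym.ltr a := by
  cases x <;> simp_all [RSym]

lemma rs_ltrL {x : TSym U} {a : U} (h : RSym Sa Q bar (TSym.ltr a) x) :
    ∃ b, x = TSym.ltr b := by
  cases x <;> simp_all [RSym]

lemma strOf_forall₂_R :
    ∀ {s : List U} {w : List (TSym U)}, List.Forall₂ (RSym Sa Q bar) (strOf s) w →
      ∃ s', w = strOf s' := by
  intro s
  induction s with
  | nil => intro w h; exact ⟨[], (forall₂_nilL h).symm ▸ rfl⟩
  | cons a s ih =>
    intro w h
    obtain ⟨y, w', rfl, hay, h'⟩ := forall₂_consL h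
    obtain ⟨b, rfl⟩ := rs_ltrL hay
    obtain ⟨s', rfl⟩ := ih h'
    exact ⟨b :: s', rfl⟩

lemma strOf_forall₂_L :
    ∀ {s : List U} {w : List (TSym U)}, List.Forall₂ (RSym Sa Q bar) w (strOf s) →
      ∃ s', w = strOf s' := by
  intro s
  induction s with
  | nil => intro w h; exact ⟨[], (forall₂_nilR h).symm ▸ rfl⟩
  | cons a s ih =>
    intro w h
    obtain ⟨y, w', rfl, hay, h'⟩ := forall₂_consR h
    obtain ⟨b, rfl⟩ := rs_ltrR hay
    obtain ⟨s', rfl⟩ := ih h'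
    exact ⟨b :: s', rfl⟩

lemma head?_not_slash {s : List U} {r : List (TSym U)} {y : TSym U}
    (hy : y ∈ (strOf s ++ ([TSym.cl] ++ r)).head?) : y ≠ TSym.slash := by
  cases s <;> simp [strOf] at hy <;> subst hy <;> simp

lemma rel_app {R : TSym U → TSym U → Prop} {a b c d : List (TSym U)}
    (h1 : List.Forall₂ R a b) (h2 : List.Forall₂ R c d) :
    List.Forall₂ R (a ++ c) (b ++ d) := List.rel_append h1 h2

include hSaQ hid hfresh hinj in
/-- Forward simulation: a move of the barred automaton is matched by a move
of the original automaton along the `RSym` relation. -/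
lemma sim_fwd (hwf : GWF Sa Q Qf Q0 Δ γ) {u u' v' : List (TSym U)}
    (hf : List.Forall₂ (RSym Sa Q bar) u u')
    (h : GMove (bar '' Q0) (barRules bar Δ) (barGamma bar Q γ) u' v') :
    ∃ v, GMove Q0 Δ γ u v ∧ List.Forall₂ (RSym Sa Q bar) v v' := by
  obtain ⟨-, -, -, hQ0, hΔ, hγ⟩ := hwf
  cases h with
  | @init l r s a ha =>
    obtain ⟨a₀, ha₀, rfl⟩ := ha
    obtain ⟨w4, r', rfl, hf4, hr⟩ := forall₂_splitR hf
    obtain ⟨w3, c', rfl, hf3, hc⟩ := forall₂_splitR hf4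
    obtain ⟨w2, w', rfl, hf2, hw⟩ := forall₂_splitR hf3
    obtain ⟨l', o', rfl, hl, ho⟩ := forall₂_splitR hf2
    obtain ⟨x, o'', rfl, hx, ho'⟩ := forall₂_consR ho
    rw [forall₂_nilR ho', rs_opR hx]
    obtain ⟨y, c'', rfl, hy, hc'⟩ := forall₂_consR hc
    rw [forall₂_nilR hc', rs_clR hy]
    obtain ⟨s', rfl⟩ := strOf_forall₂_L hw
    refine ⟨_, GMove.init (l := l') (r := r') (s := s') ha₀, ?_⟩
    refine rel_app (rel_app (rel_app (rel_app hl ?_) hw) (.cons trivial .nil)) hr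
    exact .cons trivial (.cons (Or.inr ⟨hQ0 ha₀, rfl⟩) (.cons trivial .nil))
  | @horiz l r s a b c hrule =>
    obtain ⟨q, b₀, p, hΔ₀, hx⟩ := hrule
    obtain ⟨hq, hb₀, hp⟩ := hΔ _ hΔ₀
    obtain ⟨w4, r', rfl, hf4, hr⟩ := forall₂_splitR hf
    obtain ⟨w3, c', rfl, hf3, hc⟩ := forall₂_splitR hf4
    obtain ⟨w2, w', rfl, hf2, hw⟩ := forall₂_splitR hf3
    obtain ⟨l', m', rfl, hl, hm⟩ := forall₂_splitR hf2
    obtain ⟨x1, m1, rfl, h1, hm1⟩ := forall₂_consR hm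
    obtain ⟨x2, m2, rfl, h2, hm2⟩ := forall₂_consR hm1
    obtain ⟨x3, m3, rfl, h3, hm3⟩ := forall₂_consR hm2
    obtain ⟨x4, m4, rfl, h4, hm4⟩ := forall₂_consR hm3
    rw [forall₂_nilR hm4, rs_opR h1, rs_slashR h3]
    obtain ⟨a₁, rfl⟩ := rs_ltrR h2
    obtain ⟨b₁, rfl⟩ := rs_ltrR h4
    obtain ⟨s', rfl⟩ := strOf_forall₂_L hw
    obtain ⟨y, c'', rfl, hy, hc'⟩ := forall₂_consR hc
    rw [forall₂_nilR hc', rs_clR hy]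
    rcases hx with hx | hx <;> simp only [Prod.mk.injEq] at hx <;>
      obtain ⟨rfl, rfl, rfl⟩ := hx
    · obtain ⟨rfl, haQ⟩ := rs_state hSaQ hid hfresh hinj h2 hq
      obtain rfl := rs_letter hSaQ hid hfresh hinj h4 hb₀
      refine ⟨_, GMove.horiz (l := l') (r := r') (s := s') hΔ₀, ?_⟩
      refine rel_app (rel_app (rel_app (rel_app hl ?_) hw) (.cons trivial .nil)) hr
      exact .cons trivial (.cons (Or.inr ⟨hp, rfl⟩) (.cons trivial .nil))
    · obtain ⟨rfl, haQ⟩ := rs_state hSaQ hid hfresh hinj h2 hq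
      obtain ⟨rfl, hbQ⟩ := rs_state hSaQ hid hfresh hinj h4 hb₀
      refine ⟨_, GMove.horiz (l := l') (r := r') (s := s') hΔ₀, ?_⟩
      refine rel_app (rel_app (rel_app (rel_app hl ?_) hw) (.cons trivial .nil)) hr
      exact .cons trivial (.cons (Or.inr ⟨hp, rfl⟩) (.cons trivial .nil))
  | @vert l r a b hb =>
    obtain ⟨q, hq, rfl, p, hp, rfl⟩ := hb
    obtain ⟨w2, r', rfl, hf2, hr⟩ := forall₂_splitR hf
    obtain ⟨l', m', rfl, hl, hm⟩ := forall₂_splitR hf2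
    obtain ⟨x1, m1, rfl, h1, hm1⟩ := forall₂_consR hm
    obtain ⟨x2, m2, rfl, h2, hm2⟩ := forall₂_consR hm1
    obtain ⟨x3, m3, rfl, h3, hm3⟩ := forall₂_consR hm2
    obtain ⟨x4, m4, rfl, h4, hm4⟩ := forall₂_consR hm3
    rw [forall₂_nilR hm4, rs_opR h1, rs_slashR h3, rs_clR h4]
    obtain ⟨a₁, rfl⟩ := rs_ltrR h2
    obtain ⟨he, haQ⟩ := rs_state hSaQ hid hfresh hinj h2 hq
    refine ⟨_, GMove.vert (l := l') (r := r') (a := a₁) (b := p) (he ▸ hp), ?_⟩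
    exact rel_app (rel_app hl (.cons (Or.inr ⟨hγ q hq hp, rfl⟩) .nil)) hr

include hSaQ hid hfresh hinj in
/-- Backward simulation: a move of the original automaton is matched by a
move of the barred automaton, preserving the chain invariant. -/
lemma sim_bwd (hwf : GWF Sa Q Qf Q0 Δ γ) {u u' v : List (TSym U)}
    (hf : List.Forall₂ (RSym Sa Q bar) u u')
    (hP : List.Chain' (CRel Q bar) u')
    (h : GMove Q0 Δ γ u v) :
    ∃ v', GMove (bar '' Q0) (barRules bar Δ) (barGamma bar Q γ) u' v' ∧
      List.Forall₂ (RSym Sa Q bar) v v' ∧ List.Chain' (CRel Q bar) v' := by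
  obtain ⟨-, -, -, hQ0, hΔ, hγ⟩ := hwf
  cases h with
  | @init l r s a ha =>
    obtain ⟨w4, r', rfl, hf4, hr⟩ := forall₂_splitL hf
    obtain ⟨w3, c', rfl, hf3, hc⟩ := forall₂_splitL hf4
    obtain ⟨w2, w', rfl, hf2, hw⟩ := forall₂_splitL hf3
    obtain ⟨l', o', rfl, hl, ho⟩ := forall₂_splitL hf2
    obtain ⟨x, o'', rfl, hx, ho'⟩ := forall₂_consL ho
    obtain rfl := forall₂_nilL ho'
    obtain rfl := rs_opL hx
    obtain ⟨y, c'', rfl, hy, hc'⟩ := forall₂_consL hc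
    obtain rfl := forall₂_nilL hc'
    obtain rfl := rs_clL hy
    obtain ⟨s', rfl⟩ := strOf_forall₂_R hw
    refine ⟨_, GMove.init (l := l') (r := r') (s := s') (a := bar a) ⟨a, ha, rfl⟩, ?_, ?_⟩
    · refine rel_app (rel_app (rel_app (rel_app hl ?_) hw) (.cons trivial .nil)) hr
      exact .cons trivial (.cons (Or.inr ⟨hQ0 ha, rfl⟩) (.cons trivial .nil))
    · have hP' : List.Chain' (CRel Q bar)
          (l' ++ ([TSym.op] ++ (strOf s' ++ ([TSym.cl] ++ r')))) := by
        simpa only [List.append_assoc] using hP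
      have hrep := chain'_replace
        (n := [TSym.op, TSym.ltr (bar a), TSym.slash]) hP'
        (by simp) (by simp)
        (List.isChain_cons_cons.2 ⟨cr_not_slash (by simp),
          List.isChain_cons_cons.2 ⟨fun _ => ⟨a, hQ0 ha, rfl⟩, List.isChain_singleton _⟩⟩)
        (by rintro x - y hy; simp only [List.head?_cons, Option.mem_some_iff] at hy
            exact cr_not_slash (by rw [← hy]; simp))
        (by rintro x - y hy; exact cr_not_slash (head?_not_slash hy))
      simpa only [List.append_assoc] using hrep
  | @horiz l r s a b c hrule =>
    obtain ⟨hq, hb, hc⟩ := hΔ _ hrule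
    obtain ⟨w4, r', rfl, hf4, hr⟩ := forall₂_splitL hf
    obtain ⟨w3, c', rfl, hf3, hcc⟩ := forall₂_splitL hf4
    obtain ⟨w2, w', rfl, hf2, hw⟩ := forall₂_splitL hf3
    obtain ⟨l', m', rfl, hl, hm⟩ := forall₂_splitL hf2
    obtain ⟨x1, m1, rfl, h1, hm1⟩ := forall₂_consL hm
    obtain ⟨x2, m2, rfl, h2, hm2⟩ := forall₂_consL hm1
    obtain ⟨x3, m3, rfl, h3, hm3⟩ := forall₂_consL hm2
    obtain ⟨x4, m4, rfl, h4, hm4⟩ := forall₂_consL hm3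
    obtain rfl := forall₂_nilL hm4
    obtain rfl := rs_opL h1
    obtain rfl := rs_slashL h3
    obtain ⟨a', rfl⟩ := rs_ltrL h2
    obtain ⟨b', rfl⟩ := rs_ltrL h4
    obtain ⟨y, c'', rfl, hy, hc'⟩ := forall₂_consL hcc
    obtain rfl := forall₂_nilL hc'
    obtain rfl := rs_clL hy
    obtain ⟨s', rfl⟩ := strOf_forall₂_R hw
    have hmid : CRel Q bar (TSym.ltr a') TSym.slash :=
      chain'_mid (xs := l' ++ [TSym.op])
        (by simpa only [List.append_assoc, List.cons_append, List.singleton_append,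
              List.nil_append] using hP)
    obtain ⟨q₀, hq₀, he⟩ := hmid rfl
    injection he with he
    subst he
    obtain ⟨he2, -⟩ := rs_state hSaQ hid hfresh hinj h2 hq₀
    have hmem : (bar q₀, b', bar c) ∈ barRules bar Δ := by
      rcases h4 with ⟨-, he4⟩ | ⟨-, he4⟩
      · exact ⟨a, b, c, hrule, Or.inl (by rw [he2, he4])⟩
      · exact ⟨a, b, c, hrule, Or.inr (by rw [he2, he4])⟩
    refine ⟨_, GMove.horiz (l := l') (r := r') (s := s') hmem, ?_, ?_⟩
    · refine rel_app (rel_app (rel_app (rel_app hl ?_) hw) (.cons trivial .nil)) hr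
      exact .cons trivial (.cons (Or.inr ⟨hc, rfl⟩) (.cons trivial .nil))
    · have hP' : List.Chain' (CRel Q bar)
          (l' ++ ([TSym.op, TSym.ltr (bar q₀), TSym.slash, TSym.ltr b'] ++
            (strOf s' ++ ([TSym.cl] ++ r')))) := by
        simpa only [List.append_assoc] using hP
      have hrep := chain'_replace
        (n := [TSym.op, TSym.ltr (bar c), TSym.slash]) hP'
        (by simp) (by simp)
        (List.isChain_cons_cons.2 ⟨cr_not_slash (by simp),
          List.isChain_cons_cons.2 ⟨fun _ => ⟨c, hc, rfl⟩, List.isChain_singleton _⟩⟩)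
        (by rintro x - y hy; simp only [List.head?_cons, Option.mem_some_iff] at hy
            exact cr_not_slash (by rw [← hy]; simp))
        (by rintro x - y hy; exact cr_not_slash (head?_not_slash hy))
      simpa only [List.append_assoc] using hrep
  | @vert l r a b hb =>
    obtain ⟨w2, r', rfl, hf2, hr⟩ := forall₂_splitL hf
    obtain ⟨l', m', rfl, hl, hm⟩ := forall₂_splitL hf2
    obtain ⟨x1, m1, rfl, h1, hm1⟩ := forall₂_consL hm
    obtain ⟨x2, m2, rfl, h2, hm2⟩ := forall₂_consL hm1
    obtain ⟨x3, m3, rfl, h3, hm3⟩ := forall₂_consL hm2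
    obtain ⟨x4, m4, rfl, h4, hm4⟩ := forall₂_consL hm3
    obtain rfl := forall₂_nilL hm4
    obtain rfl := rs_opL h1
    obtain rfl := rs_slashL h3
    obtain rfl := rs_clL h4
    obtain ⟨a', rfl⟩ := rs_ltrL h2
    have hmid : CRel Q bar (TSym.ltr a') TSym.slash :=
      chain'_mid (xs := l' ++ [TSym.op])
        (by simpa only [List.append_assoc, List.cons_append, List.singleton_append,
              List.nil_append] using hP)
    obtain ⟨q₀, hq₀, he⟩ := hmid rfl
    injection he with he
    subst he
    obtain ⟨he2, haQ⟩ := rs_state hSaQ hid hfresh hinj h2 hq₀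
    have hbQ : b ∈ Q := hγ a haQ hb
    refine ⟨_, GMove.vert (l := l') (r := r') (a := bar q₀) (b := bar b)
      ⟨q₀, hq₀, rfl, b, he2 ▸ hb, rfl⟩, ?_, ?_⟩
    · exact rel_app (rel_app hl (.cons (Or.inr ⟨hbQ, rfl⟩) .nil)) hr
    · have hP' : List.Chain' (CRel Q bar)
          (l' ++ ([TSym.op, TSym.ltr (bar q₀), TSym.slash, TSym.cl] ++ r')) := by
        simpa only [List.append_assoc] using hP
      have hrep := chain'_replace (n := [TSym.ltr (bar b)]) hP'
        (by simp) (by simp) (List.isChain_singleton _)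
        (by rintro x - y hy; simp only [List.head?_cons, Option.mem_some_iff] at hy
            exact cr_not_slash (by rw [← hy]; simp))
        (by rintro x hx y -
            simp only [List.getLast?_singleton, Option.mem_some_iff] at hx
            subst hx
            exact fun _ => ⟨b, hbQ, rfl⟩)
      simpa only [List.append_assoc] using hrep

include hSaQ hid hfresh hinj in
lemma final_bwd {q : U} (hq : q ∈ Q) {v : List (TSym U)}
    (h : List.Forall₂ (RSym Sa Q bar) v (finalTree (bar q))) : v = finalTree q := by
  simp only [finalTree] at h ⊢
  obtain ⟨x1, m1, rfl, h1, hm1⟩ := forall₂_consR h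
  obtain ⟨x2, m2, rfl, h2, hm2⟩ := forall₂_consR hm1
  obtain ⟨x3, m3, rfl, h3, hm3⟩ := forall₂_consR hm2
  obtain ⟨x4, m4, rfl, h4, hm4⟩ := forall₂_consR hm3
  obtain rfl := forall₂_nilR hm4
  obtain rfl := rs_opR h1
  obtain rfl := rs_slashR h3
  obtain rfl := rs_clR h4
  obtain ⟨a, rfl⟩ := rs_ltrR h2
  obtain ⟨he, -⟩ := rs_state hSaQ hid hfresh hinj h2 hq
  rw [he]

include hSaQ hid hfresh hinj in
lemma final_fwd {q : U} (hq : q ∈ Q) {v' : List (TSym U)}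
    (h : List.Forall₂ (RSym Sa Q bar) (finalTree q) v')
    (hP : List.Chain' (CRel Q bar) v') : v' = finalTree (bar q) := by
  simp only [finalTree] at h ⊢
  obtain ⟨x1, m1, rfl, h1, hm1⟩ := forall₂_consL h
  obtain ⟨x2, m2, rfl, h2, hm2⟩ := forall₂_consL hm1
  obtain ⟨x3, m3, rfl, h3, hm3⟩ := forall₂_consL hm2
  obtain ⟨x4, m4, rfl, h4, hm4⟩ := forall₂_consL hm3
  obtain rfl := forall₂_nilL hm4
  obtain rfl := rs_opL h1
  obtain rfl := rs_slashL h3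
  obtain rfl := rs_clL h4
  obtain ⟨b, rfl⟩ := rs_ltrL h2
  have hmid : CRel Q bar (TSym.ltr b) TSym.slash :=
    chain'_mid (xs := [TSym.op]) (ys := [TSym.cl]) hP
  obtain ⟨q₁, hq₁, he⟩ := hmid rfl
  injection he with he
  subst he
  obtain ⟨he2, -⟩ := rs_state hSaQ hid hfresh hinj h2 hq₁
  rw [he2]

lemma chain'_no_slash : ∀ {l : List (TSym U)}, (∀ y ∈ l, y ≠ TSym.slash) →
    List.Chain' (CRel Q bar) l
  | [], _ => List.IsChain.nil
  | x :: l, h =>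
    List.IsChain.cons (chain'_no_slash fun y hy => h y (List.mem_cons_of_mem _ hy))
      (fun y hy => cr_not_slash (h y (List.mem_cons_of_mem _ (List.mem_of_mem_head? hy))))

lemma tree_syms {S : Set U} {t : List (TSym U)} (h : IsTree (ltrs S) t) :
    ∀ x ∈ t, x = TSym.op ∨ x = TSym.cl ∨ ∃ a ∈ S, x = TSym.ltr a := by
  induction h with
  | nil => intro x hx; simp only [List.mem_cons, List.not_mem_nil, or_false] at hx
           rcases hx with rfl | rfl
           · exact Or.inl rfl
           · exact Or.inr (Or.inl rfl)
  | @single y hy =>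
    intro x hx
    obtain ⟨a, ha, rfl⟩ := hy
    simp only [List.mem_cons, List.not_mem_nil, or_false] at hx
    rcases hx with rfl | rfl | rfl
    · exact Or.inl rfl
    · exact Or.inr (Or.inr ⟨a, ha, rfl⟩)
    · exact Or.inr (Or.inl rfl)
  | @concat xs ys _ _ ih1 ih2 =>
    intro x hx
    simp only [List.mem_cons, List.mem_append, List.not_mem_nil, or_false] at hx
    rcases hx with rfl | (hx | hx) | rfl
    · exact Or.inl rfl
    · exact ih1 x (by simp [hx])
    · exact ih2 x (by simp [hx])
    · exact Or.inr (Or.inl rfl)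
  | @encap t' _ ih =>
    intro x hx
    simp only [List.mem_cons, List.mem_append, List.not_mem_nil, or_false] at hx
    rcases hx with rfl | hx | rfl
    · exact Or.inl rfl
    · exact ih x hx
    · exact Or.inr (Or.inl rfl)

lemma tree_self {t : List (TSym U)} (ht : IsTree (ltrs Sa) t) :
    List.Forall₂ (RSym Sa Q bar) t t :=
  List.forall₂_same.2 fun x hx => by
    rcases tree_syms ht x hx with rfl | rfl | ⟨a, ha, rfl⟩
    · trivial
    · trivial
    · exact Or.inl ⟨ha, rfl⟩

lemma tree_chain {t : List (TSym U)} (ht : IsTree (ltrs Sa) t) :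
    List.Chain' (CRel Q bar) t :=
  chain'_no_slash fun y hy => by
    rcases tree_syms ht y hy with rfl | rfl | ⟨a, ha, rfl⟩ <;> simp

end Sim

lemma rtg_lift {α β : Type} {r : α → α → Prop} {r' : β → β → Prop} {S : α → β → Prop}
    (hst : ∀ u u' v, S u u' → r u v → ∃ v', r' u' v' ∧ S v v')
    {u v : α} (h : Relation.ReflTransGen r u v) :
    ∀ {u' : β}, S u u' → ∃ v', Relation.ReflTransGen r' u' v' ∧ S v v' := by
  induction h with
  | refl => exact fun hS => ⟨_, .refl, hS⟩
  | tail _ hr ih =>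
    intro u' hS
    obtain ⟨b', hb', hSb⟩ := ih hS
    obtain ⟨c', hc', hSc⟩ := hst _ _ _ hSb hr
    exact ⟨c', hb'.tail hc', hSc⟩

end PureAux

/-- For every GNFSTA `A = (Σ, Q, Q_f, Q₀, Δ, γ)` there exists a
GNFSTA with pure states recognising the same language.  Concretely, taking
fresh complementary symbols `ā = bar a` for `a ∈ Σ` (with `bar` injective on
`Σ`, its image disjoint from `Q`, and `bar q = q` for `q ∉ Σ`), the automaton
`A' = (Σ, Q ∪ Σ̄, Q̄_f, Q̄₀, Δ', γ')` is well-formed, has pure states, and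
`L(A') = L(A)`. -/
theorem pure_states_conversion {U : Type} (Sa Q Qf Q0 : Set U)
    (Δ : Set (U × U × U)) (γ : U → Set U) (hwf : GWF Sa Q Qf Q0 Δ γ)
    (bar : U → U) (hid : ∀ q, q ∉ Sa → bar q = q)
    (hfresh : ∀ a ∈ Sa, bar a ∉ Q) (hinj : Set.InjOn bar Sa) :
    GWF Sa (Q ∪ bar '' Sa) (bar '' Qf) (bar '' Q0) (barRules bar Δ) (barGamma bar Q γ) ∧
    PureG Sa (Q ∪ bar '' Sa) (bar '' Qf) (bar '' Q0) (barRules bar Δ) (barGamma bar Q γ) ∧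
    GLang Sa (bar '' Q0) (barRules bar Δ) (barGamma bar Q γ) (bar '' Qf)
      = GLang Sa Q0 Δ γ Qf := by
  obtain ⟨hQfin, hSaQ, hQfQ, hQ0Q, hΔQ, hγQ⟩ := hwf
  have hwf₀ : GWF Sa Q Qf Q0 Δ γ := ⟨hQfin, hSaQ, hQfQ, hQ0Q, hΔQ, hγQ⟩
  refine ⟨?_, ?_, ?_⟩
  · refine ⟨hQfin.union ((hQfin.subset hSaQ).image bar),
      hSaQ.trans Set.subset_union_left, ?_, ?_, ?_, ?_⟩
    · rintro x ⟨q, hq, rfl⟩; exact barQ_mem hid (hQfQ hq)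
    · rintro x ⟨q, hq, rfl⟩; exact barQ_mem hid (hQ0Q hq)
    · rintro ⟨x1, x2, x3⟩ ⟨q, b, p, hΔ₀, hx⟩
      obtain ⟨hq, hb, hp⟩ := hΔQ _ hΔ₀
      rcases hx with hx | hx <;> simp only [Prod.mk.injEq] at hx <;>
        obtain ⟨rfl, rfl, rfl⟩ := hx
      · exact ⟨barQ_mem hid hq, Or.inl hb, barQ_mem hid hp⟩
      · exact ⟨barQ_mem hid hq, barQ_mem hid hb, barQ_mem hid hp⟩
    · rintro x - y ⟨q, hq, -, p, hp, rfl⟩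
      exact barQ_mem hid (hγQ q hq hp)
  · refine ⟨?_, ?_, ?_, ?_, ?_⟩
    · rintro ⟨x1, x2, x3⟩ ⟨q, b, p, hΔ₀, hx⟩
      rcases hx with hx | hx <;> simp only [Prod.mk.injEq] at hx <;>
          obtain ⟨rfl, rfl, rfl⟩ := hx <;>
        exact ⟨bar_not_mem_Sa hSaQ hid hfresh q, bar_not_mem_Sa hSaQ hid hfresh p⟩
    · intro a ha
      ext y
      simp only [barGamma, Set.mem_setOf_eq, Set.mem_empty_iff_false, iff_false]
      rintro ⟨q, hq, he, -⟩
      exact bar_not_mem_Sa hSaQ hid hfresh q (he ▸ ha)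
    · rintro q p ⟨q₀, hq₀, -, p₀, hp₀, rfl⟩
      exact bar_not_mem_Sa hSaQ hid hfresh p₀
    · rintro x ⟨q, hq, rfl⟩
      exact ⟨barQ_mem hid (hQ0Q hq), bar_not_mem_Sa hSaQ hid hfresh q⟩
    · rintro x ⟨q, hq, rfl⟩
      exact ⟨barQ_mem hid (hQfQ hq), bar_not_mem_Sa hSaQ hid hfresh q⟩
  · ext t
    simp only [GLang, GAccepts, Set.mem_setOf_eq]
    constructor
    · rintro ⟨ht, qf', hqf', hrtg⟩
      obtain ⟨qf, hqf, rfl⟩ := hqf'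
      refine ⟨ht, qf, hqf, ?_⟩
      obtain ⟨v, hrtg', hS⟩ := rtg_lift
        (S := fun y x => List.Forall₂ (RSym Sa Q bar) x y)
        (fun u u' v hS h => sim_fwd hSaQ hid hfresh hinj hwf₀ hS h)
        hrtg (tree_self ht)
      rwa [final_bwd hSaQ hid hfresh hinj (hQfQ hqf) hS] at hrtg'
    · rintro ⟨ht, qf, hqf, hrtg⟩
      refine ⟨ht, bar qf, ⟨qf, hqf, rfl⟩, ?_⟩
      obtain ⟨v', hrtg', hS, hP⟩ := rtg_lift
        (S := fun x y => List.Forall₂ (RSym Sa Q bar) x y ∧ List.Chain' (CRel Q bar) y)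
        (fun u u' v hS h => by
          obtain ⟨v', h1, h2, h3⟩ := sim_bwd hSaQ hid hfresh hinj hwf₀ hS.1 hS.2 h
          exact ⟨v', h1, h2, h3⟩)
        hrtg ⟨tree_self ht, tree_chain ht⟩
      rwa [final_fwd hSaQ hid hfresh hinj (hQfQ hqf) hS hP] at hrtg'

end StringTree
end

section
/- For any finite string tree automaton there exists an equivalent complete FSTA, i.e. a deterministic FSTA whose transition function Δ: Q × Q → Q is defined on every pair of states, recognising the same language (up to the injective alphabet renaming a ↦ {a}). -/
/-!
The complete automaton is the subset construction: its states are the subsets of `Q`, it starts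
in `{q₀}`, its rule `(A, B) → C` has `C = {c | (a, b) → c ∈ Δ, a ∈ A, b ∈ B}`, and `A` is final
when it meets `Q_f`. Configurations of the two automata are compared position-wise by the instance
relation `v ⊴ v'` (same brackets and slashes, each state of `v` in the corresponding set of `v'`).
Every move of the NFSTA from `v` is matched, at the same position, by the move of the subset
automaton from any `v'` with `v ⊴ v'`; conversely, a move `v' ⇒ w'` of the subset automaton can be
traced back from any instance of `w'` to an instance of `v'`. Since the renamed tree
`treeRel sing t` has `t` as its only instance, an accepting run of either automaton yields one of
the other.
-/

open Function Relation

namespace List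

variable {α β : Type*} {R : α → β → Prop}

theorem forall₂_append_left_iff {l₁ l₂ : List α} {m : List β} :
    Forall₂ R (l₁ ++ l₂) m ↔ ∃ m₁ m₂, Forall₂ R l₁ m₁ ∧ Forall₂ R l₂ m₂ ∧ m = m₁ ++ m₂ := by
  refine ⟨fun h => ?_, fun ⟨m₁, m₂, h₁, h₂, hm⟩ => hm ▸ rel_append h₁ h₂⟩
  induction l₁ generalizing m with
  | nil => exact ⟨[], m, .nil, h, rfl⟩
  | cons a l ih =>
    obtain ⟨b, m', hab, h', rfl⟩ := forall₂_cons_left_iff.1 h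
    obtain ⟨m₁, m₂, h₁, h₂, rfl⟩ := ih h'
    exact ⟨b :: m₁, m₂, .cons hab h₁, h₂, rfl⟩

theorem forall₂_append_right_iff {m₁ m₂ : List β} {l : List α} :
    Forall₂ R l (m₁ ++ m₂) ↔ ∃ l₁ l₂, Forall₂ R l₁ m₁ ∧ Forall₂ R l₂ m₂ ∧ l = l₁ ++ l₂ := by
  refine ⟨fun h => ?_, fun ⟨l₁, l₂, h₁, h₂, hl⟩ => hl ▸ rel_append h₁ h₂⟩
  obtain ⟨l₁, l₂, h₁, h₂, rfl⟩ := forall₂_append_left_iff.1 (Forall₂.flip (R := flip R) h)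
  exact ⟨l₁, l₂, h₁.flip, h₂.flip, rfl⟩

end List

theorem Relation.ReflTransGen.exists_of_simulation {α β : Type*} {r : α → α → Prop}
    {s : β → β → Prop} {p : α → β → Prop}
    (hsim : ∀ {a b a'}, p a a' → r a b → ∃ b', s a' b' ∧ p b b')
    {a b : α} {a' : β} (h : ReflTransGen r a b) (ha : p a a') :
    ∃ b', ReflTransGen s a' b' ∧ p b b' := by
  induction h with
  | refl => exact ⟨a', .refl, ha⟩
  | tail _ hbc ih =>
    obtain ⟨b', hab', hb⟩ := ih
    obtain ⟨c', hbc', hc⟩ := hsim hb hbc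
    exact ⟨c', hab'.tail hbc', hc⟩

namespace StringTree

variable {U V : Type}

theorem mem_of_ltr_mem_treeSet {S : Set U} {t : List (TSym U)} (ht : t ∈ TreeSet S) {a : U}
    (ha : TSym.ltr a ∈ t) : a ∈ S := by
  induction ht with
  | nil => simp at ha
  | single hx =>
    obtain ⟨b, hb, rfl⟩ := hx
    simp_all
  | concat _ _ ih₁ ih₂ =>
    simp only [List.mem_cons, List.mem_append, List.not_mem_nil, reduceCtorEq, false_or,
      or_false] at ha ih₁ ih₂
    exact ha.elim ih₁ ih₂
  | encap _ ih => simp_all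

theorem treeRel_mem_treeSet (f : U → V) {S : Set U} {t : List (TSym U)} (ht : t ∈ TreeSet S) :
    treeRel f t ∈ TreeSet (f '' S) := by
  induction ht with
  | nil => exact IsTree.nil
  | single hx =>
    obtain ⟨a, ha, rfl⟩ := hx
    exact IsTree.single ⟨f a, Set.mem_image_of_mem f ha, rfl⟩
  | concat _ _ ih₁ ih₂ =>
    simp only [treeRel, List.map_cons, List.map_append, symRel] at ih₁ ih₂ ⊢
    exact IsTree.concat ih₁ ih₂
  | encap _ ih =>
    simp only [treeRel, List.map_cons, List.map_append, symRel] at ih ⊢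
    exact IsTree.encap ih

theorem exists_treeRel_eq_of_mem_treeSet [Nonempty U] {f : U → V} (hf : Injective f) {S : Set U}
    {t' : List (TSym V)} (ht' : t' ∈ TreeSet (f '' S)) :
    ∃ t ∈ TreeSet S, treeRel f t = t' := by
  have hinv : LeftInverse (invFun f) f := leftInverse_invFun hf
  refine ⟨treeRel (invFun f) t', hinv.image_image S ▸ treeRel_mem_treeSet _ ht', ?_⟩
  rw [treeRel, treeRel, List.map_map]
  conv_rhs => rw [← List.map_id t']
  refine List.map_congr_left fun x hx => ?_
  cases x with
  | ltr A =>
    obtain ⟨a, -, rfl⟩ := mem_of_ltr_mem_treeSet ht' hx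
    simp [symRel, hinv a]
  | _ => rfl

theorem exists_eq_strOf_append_cl_of_inst_left {s : List U} {m : List (TSym (Set U))}
    (h : Inst (strOf s ++ [TSym.cl]) m) : ∃ s', m = strOf s' ++ [TSym.cl] := by
  -- In `rcases` patterns on `SymInst`, `⟨⟩` is a bracket or slash and `_ | _ | _ | h` a letter.
  induction s generalizing m with
  | nil =>
    rcases h with _ | ⟨⟨⟩, _ | _⟩
    exact ⟨[], rfl⟩
  | cons _ s ih =>
    rcases h with _ | ⟨_ | _ | _ | _, h⟩
    obtain ⟨s', rfl⟩ := ih h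
    exact ⟨_ :: s', rfl⟩

theorem exists_eq_strOf_append_cl_of_inst_right {s' : List (Set U)} {l : List (TSym U)}
    (h : Inst l (strOf s' ++ [TSym.cl])) : ∃ s, l = strOf s ++ [TSym.cl] := by
  induction s' generalizing l with
  | nil =>
    rcases h with _ | ⟨⟨⟩, _ | _⟩
    exact ⟨[], rfl⟩
  | cons _ s' ih =>
    rcases h with _ | ⟨_ | _ | _ | _, h⟩
    obtain ⟨s, rfl⟩ := ih h
    exact ⟨_ :: s, rfl⟩

theorem symInst_symRel_sing_iff {x y : TSym U} : SymInst x (symRel sing y) ↔ x = y := by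
  constructor
  · intro h
    cases y <;> cases h <;> first | rfl | exact congrArg TSym.ltr ‹_›
  · rintro rfl
    cases x <;> constructor
    rfl

theorem inst_treeRel_sing_iff {v t : List (TSym U)} : Inst v (treeRel sing t) ↔ v = t := by
  simp only [Inst, treeRel, List.forall₂_map_right_iff, symInst_symRel_sing_iff,
    List.forall₂_eq_eq_eq]

def detDelta (Δ : Set (U × U × U)) (A B : Set U) : Set U :=
  {c | ∃ a ∈ A, ∃ b ∈ B, (a, b, c) ∈ Δ}

def detRules (Q : Set U) (Δ : Set (U × U × U)) : Set (Set U × Set U × Set U) :=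
  {x | x.1 ⊆ Q ∧ x.2.1 ⊆ Q ∧ x.2.2 = detDelta Δ x.1 x.2.1}

-- The subset automaton has rules only between subsets of `Q`, so the forward simulation must keep
-- every set it writes inside `Q`.
def LettersWithin (Q : Set U) (v : List (TSym (Set U))) : Prop :=
  ∀ A, TSym.ltr A ∈ v → A ⊆ Q

theorem detDelta_subset {Q : Set U} {Δ : Set (U × U × U)} (hΔ : ∀ p ∈ Δ, p.2.2 ∈ Q)
    {A B : Set U} : detDelta Δ A B ⊆ Q :=
  fun _ ⟨_, _, _, _, h⟩ => hΔ _ h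

inductive NRewrite (q0 : U) (Δ : Set (U × U × U)) : List (TSym U) → List (TSym U) → Prop
  | init (s : List U) :
      NRewrite q0 Δ (.op :: (strOf s ++ [.cl])) (.op :: .ltr q0 :: .slash :: (strOf s ++ [.cl]))
  | horiz (s : List U) {a b c : U} : (a, b, c) ∈ Δ →
      NRewrite q0 Δ (.op :: .ltr a :: .slash :: .ltr b :: (strOf s ++ [.cl]))
        (.op :: .ltr c :: .slash :: (strOf s ++ [.cl]))
  | vert (a : U) : NRewrite q0 Δ [.op, .ltr a, .slash, .cl] [.ltr a]

theorem nMove_iff {q0 : U} {Δ : Set (U × U × U)} {u v : List (TSym U)} :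
    NMove q0 Δ u v ↔ ∃ l x y r, NRewrite q0 Δ x y ∧ u = l ++ x ++ r ∧ v = l ++ y ++ r := by
  unfold NMove
  constructor
  · rintro (@⟨l, r, s, _, rfl⟩ | @⟨l, r, s, _, _, _, h⟩ | @⟨l, r, a, b, hb⟩)
    · exact ⟨l, _, _, r, .init s, by simp, by simp⟩
    · exact ⟨l, _, _, r, .horiz s h, by simp, by simp⟩
    · obtain rfl : b = a := hb
      exact ⟨l, _, _, r, .vert b, by simp, by simp⟩
  · rintro ⟨l, x, y, r, s | ⟨s, h⟩ | a, rfl, rfl⟩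
    · simpa using GMove.init (l := l) (r := r) (s := s) (Set.mem_singleton q0)
    · simpa using GMove.horiz (l := l) (r := r) (s := s) (γ := fun a => {a}) (Q0 := {q0}) h
    · simpa using GMove.vert (l := l) (r := r) (Δ := Δ) (Q0 := {q0}) (Set.mem_singleton a)

theorem NRewrite.exists_det_of_inst {q0 : U} {Q : Set U} {Δ : Set (U × U × U)} (hq0 : q0 ∈ Q)
    (hΔ : ∀ p ∈ Δ, p.2.2 ∈ Q) {x y : List (TSym U)} {x' : List (TSym (Set U))}
    (h : NRewrite q0 Δ x y) (hx : Inst x x') (hx' : LettersWithin Q x') :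
    ∃ y', NRewrite {q0} (detRules Q Δ) x' y' ∧ Inst y y' ∧ LettersWithin Q y' := by
  cases h with
  | init s =>
    rcases hx with _ | ⟨⟨⟩, hx⟩
    obtain ⟨s', rfl⟩ := exists_eq_strOf_append_cl_of_inst_left hx
    refine ⟨_, .init s', .cons .op (.cons (.ltr rfl) (.cons .slash hx)), ?_⟩
    simp_all [LettersWithin]
  | horiz s hab =>
    rcases hx with
      _ | ⟨⟨⟩, _ | ⟨_ | _ | _ | @⟨_, A, ha⟩, _ | ⟨⟨⟩, _ | ⟨_ | _ | _ | @⟨_, B, hb⟩, hx⟩⟩⟩⟩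
    obtain ⟨s', rfl⟩ := exists_eq_strOf_append_cl_of_inst_left hx
    have hrule : (A, B, detDelta Δ A B) ∈ detRules Q Δ := ⟨hx' A (by simp), hx' B (by simp), rfl⟩
    refine ⟨_, .horiz s' hrule, .cons .op (.cons (.ltr ⟨_, ha, _, hb, hab⟩) (.cons .slash hx)), ?_⟩
    simp_all [LettersWithin, detDelta_subset hΔ]
  | vert a =>
    rcases hx with _ | ⟨⟨⟩, _ | ⟨_ | _ | _ | ha, _ | ⟨⟨⟩, _ | ⟨⟨⟩, _ | _⟩⟩⟩⟩
    refine ⟨_, .vert _, .cons (.ltr ha) .nil, ?_⟩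
    simp_all [LettersWithin]

theorem NRewrite.exists_inst_of_det {q0 : U} {Q : Set U} {Δ : Set (U × U × U)}
    {x' y' : List (TSym (Set U))} {y : List (TSym U)}
    (h : NRewrite {q0} (detRules Q Δ) x' y') (hy : Inst y y') :
    ∃ x, Inst x x' ∧ NRewrite q0 Δ x y := by
  cases h with
  | init s' =>
    rcases hy with _ | ⟨⟨⟩, _ | ⟨_ | _ | _ | hq, _ | ⟨⟨⟩, hy⟩⟩⟩
    obtain rfl : _ = q0 := hq
    obtain ⟨s, rfl⟩ := exists_eq_strOf_append_cl_of_inst_right hy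
    exact ⟨_, .cons .op hy, .init s⟩
  | horiz s' hrule =>
    obtain ⟨-, -, hC⟩ := hrule
    dsimp only at hC
    subst hC
    rcases hy with _ | ⟨⟨⟩, _ | ⟨_ | _ | _ | ⟨a, ha, b, hb, hab⟩, _ | ⟨⟨⟩, hy⟩⟩⟩
    obtain ⟨s, rfl⟩ := exists_eq_strOf_append_cl_of_inst_right hy
    exact ⟨_, .cons .op (.cons (.ltr ha) (.cons .slash (.cons (.ltr hb) hy))), .horiz s hab⟩
  | vert A =>
    rcases hy with _ | ⟨_ | _ | _ | ha, _ | _⟩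
    exact ⟨_, .cons .op (.cons (.ltr ha) (.cons .slash (.cons .cl .nil))), .vert _⟩

theorem lettersWithin_append {Q : Set U} {u v : List (TSym (Set U))} :
    LettersWithin Q (u ++ v) ↔ LettersWithin Q u ∧ LettersWithin Q v := by
  simp only [LettersWithin, List.mem_append, or_imp, forall_and]

theorem lettersWithin_treeRel_sing {S Q : Set U} (hS : S ⊆ Q) {t : List (TSym U)}
    (ht : t ∈ TreeSet S) : LettersWithin Q (treeRel sing t) := by
  intro A hA
  obtain ⟨_ | _ | _ | a, ha, hA⟩ := List.mem_map.1 hA <;> cases hA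
  exact Set.singleton_subset_iff.2 (hS (mem_of_ltr_mem_treeSet ht ha))

theorem exists_detMove_of_nMove {q0 : U} {Q : Set U} {Δ : Set (U × U × U)} (hq0 : q0 ∈ Q)
    (hΔ : ∀ p ∈ Δ, p.2.2 ∈ Q) {v w : List (TSym U)} {v' : List (TSym (Set U))}
    (hv : Inst v v' ∧ LettersWithin Q v') (h : NMove q0 Δ v w) :
    ∃ w', NMove {q0} (detRules Q Δ) v' w' ∧ Inst w w' ∧ LettersWithin Q w' := by
  obtain ⟨l, x, y, r, hxy, rfl, rfl⟩ := nMove_iff.1 h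
  obtain ⟨hi, hv'⟩ := hv
  obtain ⟨lx', r', hlx, hr, rfl⟩ := List.forall₂_append_left_iff.1 hi
  obtain ⟨l', x', hl, hx, rfl⟩ := List.forall₂_append_left_iff.1 hlx
  simp only [lettersWithin_append] at hv'
  obtain ⟨y', hxy', hy, hy'⟩ := hxy.exists_det_of_inst hq0 hΔ hx hv'.1.2
  refine ⟨l' ++ y' ++ r', nMove_iff.2 ⟨l', x', y', r', hxy', rfl, rfl⟩,
    List.rel_append (List.rel_append hl hy) hr, ?_⟩
  simp only [lettersWithin_append]
  exact ⟨⟨hv'.1.1, hy'⟩, hv'.2⟩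

theorem exists_nMove_of_detMove {q0 : U} {Q : Set U} {Δ : Set (U × U × U)}
    {v' w' : List (TSym (Set U))} {w : List (TSym U)}
    (hw : Inst w w') (h : NMove {q0} (detRules Q Δ) v' w') :
    ∃ v, NMove q0 Δ v w ∧ Inst v v' := by
  obtain ⟨l', x', y', r', hxy', rfl, rfl⟩ := nMove_iff.1 h
  obtain ⟨ly, r, hly, hr, rfl⟩ := List.forall₂_append_right_iff.1 hw
  obtain ⟨l, y, hl, hy, rfl⟩ := List.forall₂_append_right_iff.1 hly
  obtain ⟨x, hx, hxy⟩ := hxy'.exists_inst_of_det hy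
  exact ⟨l ++ x ++ r, nMove_iff.2 ⟨l, x, y, r, hxy, rfl, rfl⟩,
    List.rel_append (List.rel_append hl hx) hr⟩

def detFinal (Q Qf : Set U) : Set (Set U) :=
  {A | A ⊆ Q ∧ (A ∩ Qf).Nonempty}

theorem nAccepts_det_of_nAccepts {Sa Q Qf : Set U} {q0 : U} {Δ : Set (U × U × U)}
    (hSa : Sa ⊆ Q) (hq0 : q0 ∈ Q) (hΔ : ∀ p ∈ Δ, p.2.2 ∈ Q) {t : List (TSym U)}
    (ht : t ∈ TreeSet Sa) (h : NAccepts q0 Δ Qf t) :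
    NAccepts {q0} (detRules Q Δ) (detFinal Q Qf) (treeRel sing t) := by
  obtain ⟨q, hq, hrun⟩ := h
  obtain ⟨w', hrun', hw, hw'⟩ := hrun.exists_of_simulation
    (p := fun v v' => Inst v v' ∧ LettersWithin Q v') (exists_detMove_of_nMove hq0 hΔ)
    ⟨inst_treeRel_sing_iff.2 rfl, lettersWithin_treeRel_sing hSa ht⟩
  rcases hw with _ | ⟨⟨⟩, _ | ⟨_ | _ | _ | @⟨_, A, hqA⟩, _ | ⟨⟨⟩, _ | ⟨⟨⟩, _ | _⟩⟩⟩⟩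
  exact ⟨A, ⟨hw' A (by simp), q, hqA, hq⟩, hrun'⟩

theorem nAccepts_of_nAccepts_det {Q Qf : Set U} {q0 : U} {Δ : Set (U × U × U)}
    {t : List (TSym U)} (h : NAccepts {q0} (detRules Q Δ) (detFinal Q Qf) (treeRel sing t)) :
    NAccepts q0 Δ Qf t := by
  obtain ⟨A, ⟨-, q, hqA, hq⟩, hrun⟩ := h
  have hfinal : Inst (finalTree q) (finalTree A) :=
    .cons .op (.cons (.ltr hqA) (.cons .slash (.cons .cl .nil)))
  -- Backward simulation is forward simulation of the reversed move relations.
  obtain ⟨v, hrun', hv⟩ := (reflTransGen_swap.2 hrun).exists_of_simulation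
    (p := flip Inst) exists_nMove_of_detMove hfinal
  obtain rfl := inst_treeRel_sing_iff.1 hv
  exact ⟨q, hq, reflTransGen_swap.1 hrun'⟩

theorem complete_automaton_general {U : Type} (Sa Q Qf : Set U) (q0 : U)
    (Δ : Set (U × U × U)) (hwf : NWF Sa Q Qf q0 Δ) :
    ∃ (Q' Qf' : Set (Set U)) (q0' : Set U) (Δ' : Set (Set U × Set U × Set U)),
      NWF (sing '' Sa) Q' Qf' q0' Δ' ∧
      (∀ a' ∈ Q', ∀ b' ∈ Q', ∃! c', (a', b', c') ∈ Δ') ∧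
      NLang (sing '' Sa) q0' Δ' Qf' = treeRel sing '' NLang Sa q0 Δ Qf := by
  obtain ⟨hQ, hSa, -, hq0, hΔ⟩ := hwf
  have hΔ' : ∀ p ∈ Δ, p.2.2 ∈ Q := fun p hp => (hΔ p hp).2.2
  refine ⟨{A | A ⊆ Q}, detFinal Q Qf, {q0}, detRules Q Δ, ⟨hQ.finite_subsets, ?_, fun A hA => hA.1,
    Set.singleton_subset_iff.2 hq0, fun p hp => ⟨hp.1, hp.2.1, hp.2.2 ▸ detDelta_subset hΔ'⟩⟩,
    fun A hA B hB => ⟨detDelta Δ A B, ⟨hA, hB, rfl⟩, fun C hC => hC.2.2⟩, ?_⟩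
  · rintro _ ⟨a, ha, rfl⟩
    exact Set.singleton_subset_iff.2 (hSa ha)
  ext t'
  constructor
  · rintro ⟨ht', hacc⟩
    have : Nonempty U := ⟨q0⟩
    obtain ⟨t, ht, rfl⟩ := exists_treeRel_eq_of_mem_treeSet Set.singleton_injective ht'
    exact ⟨t, ⟨ht, nAccepts_of_nAccepts_det hacc⟩, rfl⟩
  · rintro ⟨t, ⟨ht, hacc⟩, rfl⟩
    exact ⟨treeRel_mem_treeSet sing ht, nAccepts_det_of_nAccepts hSa hq0 hΔ' ht hacc⟩

/-- For any finite string tree automaton there exists an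
equivalent complete FSTA, i.e. a deterministic FSTA whose transition
function `Δ : Q × Q → Q` is defined on every pair of states, recognising the
same language (up to the injective alphabet renaming `a ↦ {a}`). -/
theorem complete_automaton {U : Type} [Infinite U] (Sa Q Qf : Set U) (q0 : U)
    (Δ : Set (U × U × U)) (hwf : NWF Sa Q Qf q0 Δ) :
    ∃ (Q' Qf' : Set (Set U)) (q0' : Set U) (Δ' : Set (Set U × Set U × Set U)),
      NWF (sing '' Sa) Q' Qf' q0' Δ' ∧
      (∀ a' ∈ Q', ∀ b' ∈ Q', ∃! c', (a', b', c') ∈ Δ') ∧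
      NLang (sing '' Sa) q0' Δ' Qf' = treeRel sing '' NLang Sa q0 Δ Qf :=
  complete_automaton_general Sa Q Qf q0 Δ hwf

end StringTree
end
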